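/- arXiv:1904.05322 — 4 statements merged into one kernel-verified Lean document; each statement's English description precedes it below -/
import Mathlib

section
/- A function u on the regular m-branching tree satisfies, for every vertex x, u(x) ≤ (u(y)+u(z))/2 for all distinct successors y,z of x, and u(x) ≤ (u(x̂) + m·u(y))/(m+1) for all successors y of x (where x̂ is the predecessor, this condition omitted at the root), if and only if u is convex, i.e., for all vertices x,y and every z on the minimal path [x,y], u(z) ≤ (d(y,z)/d(x,y))·u(x) + (d(x,z)/d(x,y))·u(y). -/
open Filter Finset

/-- Vertices of the regular `m`-branching tree: finite sequences in `Fin m`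
(root-first; the root is `[]`, successors of `x` are `x ++ [i]`). -/
abbrev V (m : ℕ) := List (Fin m)

variable {m : ℕ}

/-- Distance from the root to `x`: sum of edge lengths `1/m^k`. -/
noncomputable def hgt (x : V m) : ℝ :=
  ∑ k ∈ Finset.range x.length, (1 : ℝ) / (m : ℝ) ^ (k + 1)

/-- Longest common prefix (the common ancestor of two vertices). -/
def lcp : V m → V m → V m
  | a :: x, b :: y => if a = b then a :: lcp x y else []
  | _, _ => []

/-- Path distance on the tree. -/
noncomputable def treeDist (x y : V m) : ℝ := hgt x + hgt y - 2 * hgt (lcp x y)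

/-- `z` lies on the minimal path `[x,y]`. -/
def OnPath (z x y : V m) : Prop := lcp x y <+: z ∧ (z <+: x ∨ z <+: y)

/-- Path-distance convexity on the tree. -/
def ConvexT (u : V m → ℝ) : Prop :=
  ∀ x y z : V m, x ≠ y → OnPath z x y →
    u z ≤ treeDist y z / treeDist x y * u x + treeDist x z / treeDist x y * u y

/-- The local characterization of convexity. -/
def LocConvex (u : V m → ℝ) : Prop :=
  ∀ x : V m,
    (∀ i j : Fin m, i ≠ j → u x ≤ (u (x ++ [i]) + u (x ++ [j])) / 2) ∧
    (x ≠ [] → ∀ i : Fin m,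
      u x ≤ (u x.dropLast + (m : ℝ) * u (x ++ [i])) / ((m : ℝ) + 1))

/-- Minimum over pairs of distinct successors of the averages. -/
noncomputable def binMin (u : V m → ℝ) (x : V m) : ℝ :=
  sInf {r | ∃ i j : Fin m, i ≠ j ∧ r = (u (x ++ [i]) + u (x ++ [j])) / 2}

/-- The operator governing the convex envelope (predecessor term omitted at the root). -/
noncomputable def opMin (u : V m → ℝ) (x : V m) : ℝ :=
  if x = [] then binMin u x
  else min (binMin u x)
    (sInf {r | ∃ i : Fin m,
      r = (u x.dropLast + (m : ℝ) * u (x ++ [i])) / ((m : ℝ) + 1)})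

/-- The `k`-th vertex along a branch `π`. -/
def bvert (π : ℕ → Fin m) (k : ℕ) : V m := List.ofFn (fun i : Fin k => π i)

/-- The boundary point in `[0,1]` associated to a branch. -/
noncomputable def psiB (m : ℕ) (π : ℕ → Fin m) : ℝ :=
  ∑' k : ℕ, (π k : ℝ) / (m : ℝ) ^ (k + 1)

/-- The point of `[0,1]` associated to a vertex. -/
noncomputable def psiV (x : V m) : ℝ :=
  ∑ k : Fin x.length, (x.get k : ℝ) / (m : ℝ) ^ ((k : ℕ) + 1)

/-- The successors of `y` that belong to `B`. -/
def succIn (B : Finset (V m)) (y : V m) : Finset (V m) :=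
  B.filter (fun z => ∃ i : Fin m, z = y ++ [i])

/-- A finite binary subtree rooted at `x`. -/
def IsBinSub (x : V m) (B : Finset (V m)) : Prop :=
  x ∈ B ∧ (succIn B x).card = 2 ∧
    ∀ y ∈ B, y ≠ x →
      x.length < y.length ∧ ((succIn B y).card = 0 ∨ (succIn B y).card = 2)

/-- The endpoints of `B`. -/
def Endpts (B : Finset (V m)) : Finset (V m) :=
  B.filter (fun y => (succIn B y).card = 0)

/-- Binary convexity. -/
def BinConvex (u : V m → ℝ) : Prop :=
  ∀ (x : V m) (B : Finset (V m)), IsBinSub x B →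
    u x ≤ ∑ y ∈ Endpts B, (1 : ℝ) / 2 ^ (y.length - x.length) * u y

/-- The local characterization of binary convexity. -/
def LocBinConvex (u : V m → ℝ) : Prop :=
  ∀ (x : V m) (i j : Fin m), i ≠ j → u x ≤ (u (x ++ [i]) + u (x ++ [j])) / 2

/-- Convex envelope of a boundary datum `g` (path-convexity version). -/
noncomputable def uStar (m : ℕ) (g : ℝ → ℝ) (x : V m) : ℝ :=
  sSup {r | ∃ u : V m → ℝ, ConvexT u ∧
    (∀ π : ℕ → Fin m,
      Filter.limsup (fun k => u (bvert π k)) Filter.atTop ≤ g (psiB m π)) ∧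
    r = u x}

/-- Convex envelope of a boundary datum `g` (local characterization version). -/
noncomputable def uStarL (m : ℕ) (g : ℝ → ℝ) (x : V m) : ℝ :=
  sSup {r | ∃ u : V m → ℝ, LocConvex u ∧
    (∀ π : ℕ → Fin m,
      Filter.limsup (fun k => u (bvert π k)) Filter.atTop ≤ g (psiB m π)) ∧
    r = u x}

/-- Convex envelope of an obstacle `f` defined on the tree. -/
noncomputable def envF (f : V m → ℝ) (x : V m) : ℝ :=
  sSup {r | ∃ u : V m → ℝ, LocConvex u ∧ (∀ z, u z ≤ f z) ∧ r = u x}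

/-- Binary convex envelope of a boundary datum `g`. -/
noncomputable def bEnv (m : ℕ) (g : ℝ → ℝ) (x : V m) : ℝ :=
  sSup {r | ∃ u : V m → ℝ, LocBinConvex u ∧
    (∀ π : ℕ → Fin m,
      Filter.limsup (fun k => u (bvert π k)) Filter.atTop ≤ g (psiB m π)) ∧
    r = u x}

section Aux

noncomputable def hgtN (m n : ℕ) : ℝ := ∑ k ∈ Finset.range n, (1 : ℝ) / (m : ℝ) ^ (k + 1)

lemma hgt_eq (x : V m) : hgt x = hgtN m x.length := rfl

lemma treeDist_eq (x y : V m) :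
    treeDist x y = hgtN m x.length + hgtN m y.length - 2 * hgtN m (lcp x y).length := rfl

lemma hgtN_succ (n : ℕ) : hgtN m (n + 1) = hgtN m n + 1 / (m : ℝ) ^ (n + 1) :=
  Finset.sum_range_succ _ _

lemma hgtN_le (a b : ℕ) (h : a ≤ b) : hgtN m a ≤ hgtN m b := by
  unfold hgtN
  apply Finset.sum_le_sum_of_subset_of_nonneg (Finset.range_subset_range.2 h)
  intro k _ _
  positivity

lemma hgtN_lt (hm : 2 ≤ m) {a b : ℕ} (h : a < b) : hgtN m a < hgtN m b := by
  have hM : (0:ℝ) < (m:ℝ) := by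
    have : (2:ℝ) ≤ (m:ℝ) := by exact_mod_cast hm
    linarith
  calc hgtN m a < hgtN m (a+1) := by
        rw [hgtN_succ]
        have : (0:ℝ) < 1 / (m:ℝ) ^ (a+1) := by positivity
        linarith
    _ ≤ hgtN m b := hgtN_le _ _ h

lemma lcp_nil_left (y : V m) : lcp ([] : V m) y = [] := by cases y <;> rfl

lemma lcp_nil_right (x : V m) : lcp x ([] : V m) = [] := by cases x <;> rfl

lemma lcp_cons (a b : Fin m) (x y : V m) :
    lcp (a :: x) (b :: y) = if a = b then a :: lcp x y else [] := rfl

lemma lcp_append (w a b : V m) : lcp (w ++ a) (w ++ b) = w ++ lcp a b := by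
  induction w with
  | nil => rfl
  | cons c w ih => simp [lcp_cons, ih]

lemma lcp_self_append (x t : V m) : lcp x (x ++ t) = x := by
  have h := lcp_append x [] t
  simpa [lcp_nil_left] using h

lemma lcp_append_self (x t : V m) : lcp (x ++ t) x = x := by
  have h := lcp_append x t []
  simpa [lcp_nil_right] using h

lemma lcp_prefix_left : ∀ x y : V m, lcp x y <+: x
  | [], y => by simp [lcp_nil_left]
  | a :: x, [] => by simp [lcp_nil_right]
  | a :: x, b :: y => by
      rw [lcp_cons]
      split
      · exact (List.cons_prefix_cons).2 ⟨rfl, lcp_prefix_left x y⟩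
      · exact List.nil_prefix

lemma lcp_prefix_right : ∀ x y : V m, lcp x y <+: y
  | [], y => by simp [lcp_nil_left]
  | a :: x, [] => by simp [lcp_nil_right]
  | a :: x, b :: y => by
      rw [lcp_cons]
      split
      · next h => exact (List.cons_prefix_cons).2 ⟨h, lcp_prefix_right x y⟩
      · exact List.nil_prefix

lemma prefix_dropLast {z y : V m} (h : z <+: y) (hne : z ≠ y) : z <+: y.dropLast := by
  have hl : z.length < y.length :=
    lt_of_le_of_ne h.length_le fun e => hne (h.eq_of_length e)
  rw [List.prefix_iff_eq_take] at h
  rw [List.dropLast_eq_take, h]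
  exact List.take_prefix_take_left (by omega)

section Qcomp

variable {p q r s fp fq fr fs : ℝ}

lemma qcomp1 (hpq : p ≤ q) (hqr : q ≤ r) (hrs : r ≤ s) (hpr : p < r)
    (h1 : fq * (r - p) ≤ fp * (r - q) + fr * (q - p))
    (h2 : fr * (s - p) ≤ fp * (s - r) + fs * (r - p)) :
    fq * (s - p) ≤ fp * (s - q) + fs * (q - p) := by
  nlinarith [mul_le_mul_of_nonneg_right h1 (by linarith : (0:ℝ) ≤ s - p),
    mul_le_mul_of_nonneg_right h2 (by linarith : (0:ℝ) ≤ q - p), hpr]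

lemma qcomp2 (hpq : p ≤ q) (hqr : q < r) (hrs : r ≤ s)
    (h1 : fq * (r - p) ≤ fp * (r - q) + fr * (q - p))
    (h2 : fr * (s - q) ≤ fq * (s - r) + fs * (r - q)) :
    fr * (s - p) ≤ fp * (s - r) + fs * (r - p) := by
  nlinarith [mul_le_mul_of_nonneg_right h2 (by linarith : (0:ℝ) ≤ r - p),
    mul_le_mul_of_nonneg_right h1 (by linarith : (0:ℝ) ≤ s - r), hqr]

lemma qcomp3 (hpq : p ≤ q) (hqr : q < r) (hqs : q ≤ s)
    (h1 : fq * (r - p) ≤ fp * (r - q) + fr * (q - p))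
    (h2 : fr * (s - q) ≤ fq * (s - r) + fs * (r - q)) :
    fq * (s - p) ≤ fp * (s - q) + fs * (q - p) := by
  nlinarith [mul_le_mul_of_nonneg_right h2 (by linarith : (0:ℝ) ≤ q - p),
    mul_le_mul_of_nonneg_right h1 (by linarith : (0:ℝ) ≤ s - q), hqr]

lemma qcomp4 (hps : p ≤ s) (hrs : r ≤ s) (hqs : q < s)
    (h1 : fq * (s - p) ≤ fp * (s - q) + fs * (q - p))
    (h2 : fr * (s - q) ≤ fq * (s - r) + fs * (r - q)) :
    fr * (s - p) ≤ fp * (s - r) + fs * (r - p) := by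
  nlinarith [mul_le_mul_of_nonneg_right h2 (by linarith : (0:ℝ) ≤ s - p),
    mul_le_mul_of_nonneg_right h1 (by linarith : (0:ℝ) ≤ s - r), hqs]

end Qcomp

end Aux

lemma localQ (hm : 2 ≤ m) {u : V m → ℝ} (hu : LocConvex u) (v : V m) (hv : v ≠ []) (i : Fin m) :
    u v * (hgtN m (v.length + 1) - hgtN m (v.length - 1)) ≤
      u v.dropLast * (hgtN m (v.length + 1) - hgtN m v.length) +
        u (v ++ [i]) * (hgtN m v.length - hgtN m (v.length - 1)) := by
  obtain ⟨k, hk⟩ : ∃ k, v.length = k + 1 := by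
    cases v with
    | nil => exact absurd rfl hv
    | cons a t => exact ⟨t.length, rfl⟩
  have hM : (2:ℝ) ≤ (m:ℝ) := by exact_mod_cast hm
  have h := (hu v).2 hv i
  have h' : u v * ((m:ℝ) + 1) ≤ u v.dropLast + (m:ℝ) * u (v ++ [i]) :=
    (le_div_iff₀ (by linarith : (0:ℝ) < (m:ℝ) + 1)).mp h
  rw [hk]
  simp only [Nat.add_sub_cancel]
  have e2 : hgtN m (k + 1 + 1) - hgtN m (k + 1) = 1 / (m:ℝ) ^ (k + 2) := by
    rw [hgtN_succ]; ring
  have e3 : hgtN m (k + 1) - hgtN m k = 1 / (m:ℝ) ^ (k + 1) := by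
    rw [hgtN_succ]; ring
  have e1 : hgtN m (k + 1 + 1) - hgtN m k = 1 / (m:ℝ) ^ (k + 1) + 1 / (m:ℝ) ^ (k + 2) := by
    rw [hgtN_succ, hgtN_succ]; ring
  rw [e1, e2, e3]
  have hmm : (1:ℝ) / (m:ℝ) ^ (k + 1) = (m:ℝ) * (1 / (m:ℝ) ^ (k + 2)) := by
    rw [pow_succ]
    field_simp
    ring
  rw [hmm]
  have hε : (0:ℝ) < 1 / (m:ℝ) ^ (k + 2) := by positivity
  nlinarith [mul_le_mul_of_nonneg_right h' (le_of_lt hε)]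

lemma lemA (hm : 2 ≤ m) {u : V m → ℝ} (hu : LocConvex u) :
    ∀ (n : ℕ) (y x z : V m), y.length ≤ n → x <+: z → z <+: y →
      u z * (hgtN m y.length - hgtN m x.length) ≤
        u x * (hgtN m y.length - hgtN m z.length) +
          u y * (hgtN m z.length - hgtN m x.length) := by
  intro n
  induction n with
  | zero =>
      intro y x z hy hxz hzy
      have hy0 : y = [] := List.length_eq_zero_iff.mp (Nat.le_zero.mp hy)
      subst hy0
      have hz0 : z = [] := List.prefix_nil.mp hzy
      subst hz0
      have hx0 : x = [] := List.prefix_nil.mp hxz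
      subst hx0
      simp
  | succ n IH =>
      intro y x z hy hxz hzy
      rcases eq_or_ne z y with rfl | hzyne
      · nlinarith [sq_nonneg (u x)]
      rcases eq_or_ne x z with rfl | hxzne
      · nlinarith [sq_nonneg (u y)]
      have hxlt : x.length < z.length :=
        lt_of_le_of_ne hxz.length_le fun e => hxzne (hxz.eq_of_length e)
      have hzlt : z.length < y.length :=
        lt_of_le_of_ne hzy.length_le fun e => hzyne (hzy.eq_of_length e)
      have hne : y ≠ [] := by
        rintro rfl
        exact hzyne (List.prefix_nil.mp hzy)
      have hyy' : y.dropLast ++ [y.getLast hne] = y := List.dropLast_append_getLast hne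
      set y' := y.dropLast with hy'def
      have hly' : y'.length = y.length - 1 := List.length_dropLast (xs := y)
      have hzy2 : z <+: y' := prefix_dropLast hzy hzyne
      have hy'n : y'.length ≤ n := by omega
      have hzley' : z.length ≤ y'.length := hzy2.length_le
      have hy'ne : y' ≠ [] := by
        apply List.ne_nil_of_length_pos
        omega
      have hQ1 := IH y' x z hy'n hxz hzy2
      have hxy' : x <+: y' := hxz.trans hzy2
      have hxy'ne : x ≠ y' := by
        intro e
        rw [e] at hxlt
        omega
      have hxy'' : x <+: y'.dropLast := prefix_dropLast hxy' hxy'ne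
      have hQ2 := IH y' x y'.dropLast hy'n hxy'' (List.dropLast_prefix y')
      have hQ3 := localQ hm hu y' hy'ne (y.getLast hne)
      rw [hyy'] at hQ3
      have l1 : y'.length + 1 = y.length := by omega
      have l2 : y'.length - 1 = y'.dropLast.length := (List.length_dropLast (xs := y')).symm
      rw [l1, l2] at hQ3
      have hxley'' : x.length ≤ y'.dropLast.length := hxy''.length_le
      -- Step 1: chord at y'
      have hQ4 : u y' * (hgtN m y.length - hgtN m x.length) ≤
          u x * (hgtN m y.length - hgtN m y'.length) +
            u y * (hgtN m y'.length - hgtN m x.length) := by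
        have hy''lt : y'.dropLast.length < y'.length := by
          rw [List.length_dropLast]
          omega
        exact qcomp2 (hgtN_le _ _ hxley'') (hgtN_lt hm hy''lt)
          (hgtN_le _ _ (by omega)) hQ2 hQ3
      -- Step 2: compose with chord at z
      exact qcomp1 (hgtN_le _ _ (le_of_lt hxlt)) (hgtN_le _ _ hzley')
        (hgtN_le _ _ (by omega)) (hgtN_lt hm (by omega)) hQ1 hQ4

/-- the local inequalities characterize path-distance convexity. -/
theorem stmt0 (m : ℕ) (hm : 2 ≤ m) (u : V m → ℝ) :
    LocConvex u ↔ ConvexT u := by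
  have hM : (2:ℝ) ≤ (m:ℝ) := by exact_mod_cast hm
  constructor
  · intro hu x y z hxy hz
    obtain ⟨hz1, hz2⟩ := hz
    suffices h : 0 < treeDist x y ∧
        u z * treeDist x y ≤ u x * treeDist y z + u y * treeDist x z by
      obtain ⟨hD, key⟩ := h
      rw [div_mul_eq_mul_div, div_mul_eq_mul_div, ← add_div, le_div_iff₀ hD]
      linarith
    by_cases hpre1 : x <+: y
    · -- x is a prefix of y
      have hlxy : lcp x y = x := by
        obtain ⟨t, rfl⟩ := hpre1
        exact lcp_self_append x t
      rw [hlxy] at hz1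
      have hzy : z <+: y := by
        rcases hz2 with h | h
        · have hzx : z = x := h.eq_of_length_le hz1.length_le
          rw [hzx]
          exact hpre1
        · exact h
      have hlxz : lcp x z = x := by
        obtain ⟨t, rfl⟩ := hz1
        exact lcp_self_append x t
      have hlyz : lcp y z = z := by
        obtain ⟨t, rfl⟩ := hzy
        exact lcp_append_self z t
      have hxlt : x.length < y.length :=
        lt_of_le_of_ne hpre1.length_le fun e => hxy (hpre1.eq_of_length e)
      have e1 : treeDist x y = hgtN m y.length - hgtN m x.length := by
        rw [treeDist_eq, hlxy]; try ring
      have e2 : treeDist x z = hgtN m z.length - hgtN m x.length := by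
        rw [treeDist_eq, hlxz]; try ring
      have e3 : treeDist y z = hgtN m y.length - hgtN m z.length := by
        rw [treeDist_eq, hlyz]; try ring
      rw [e1, e2, e3]
      constructor
      · linarith [hgtN_lt hm hxlt]
      · linarith [lemA hm hu y.length y x z le_rfl hz1 hzy]
    by_cases hpre2 : y <+: x
    · -- y is a prefix of x
      have hlxy : lcp x y = y := by
        obtain ⟨t, rfl⟩ := hpre2
        exact lcp_append_self y t
      rw [hlxy] at hz1
      have hzx : z <+: x := by
        rcases hz2 with h | h
        · exact h
        · have hzy : z = y := h.eq_of_length_le hz1.length_le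
          rw [hzy]
          exact hpre2
      have hlxz : lcp x z = z := by
        obtain ⟨t, rfl⟩ := hzx
        exact lcp_append_self z t
      have hlyz : lcp y z = y := by
        obtain ⟨t, rfl⟩ := hz1
        exact lcp_self_append y t
      have hylt : y.length < x.length :=
        lt_of_le_of_ne hpre2.length_le fun e => hxy (hpre2.eq_of_length e).symm
      have e1 : treeDist x y = hgtN m x.length - hgtN m y.length := by
        rw [treeDist_eq, hlxy]; try ring
      have e2 : treeDist x z = hgtN m x.length - hgtN m z.length := by
        rw [treeDist_eq, hlxz]; try ring
      have e3 : treeDist y z = hgtN m z.length - hgtN m y.length := by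
        rw [treeDist_eq, hlyz]; try ring
      rw [e1, e2, e3]
      constructor
      · linarith [hgtN_lt hm hylt]
      · linarith [lemA hm hu x.length x y z le_rfl hz1 hzx]
    · -- branching case
      obtain ⟨a, ha⟩ := lcp_prefix_left x y
      obtain ⟨b, hb⟩ := lcp_prefix_right x y
      set w := lcp x y with hw
      have hane : a ≠ [] := by
        rintro rfl
        rw [List.append_nil] at ha
        apply hpre1
        rw [← ha]
        exact lcp_prefix_right x y
      have hbne : b ≠ [] := by
        rintro rfl
        rw [List.append_nil] at hb
        apply hpre2
        rw [← hb]
        exact lcp_prefix_left x y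
      have hab : lcp a b = [] := by
        have h1 : w ++ lcp a b = w := by
          rw [← lcp_append, ha, hb, ← hw]
        exact List.append_right_eq_self.mp h1
      obtain ⟨a0, a', rfl⟩ := List.exists_cons_of_ne_nil hane
      obtain ⟨b0, b', rfl⟩ := List.exists_cons_of_ne_nil hbne
      have ha0b0 : a0 ≠ b0 := by
        intro e
        rw [lcp_cons, if_pos e] at hab
        exact List.cons_ne_nil _ _ hab
      have hw1x : w ++ [a0] <+: x := by
        rw [← ha]; exact ⟨a', by simp⟩
      have hw2y : w ++ [b0] <+: y := by
        rw [← hb]; exact ⟨b', by simp⟩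
      have lw1 : (w ++ [a0]).length = w.length + 1 := by simp
      have lw2 : (w ++ [b0]).length = w.length + 1 := by simp
      have hwxl : w.length + 1 ≤ x.length := by
        have h := hw1x.length_le; rw [lw1] at h; exact h
      have hwyl : w.length + 1 ≤ y.length := by
        have h := hw2y.length_le; rw [lw2] at h; exact h
      set A := hgtN m x.length with hA
      set B := hgtN m y.length with hB
      set W := hgtN m w.length with hW
      set W1 := hgtN m (w.length + 1) with hW1
      have hWA : W < A := hgtN_lt hm (by omega)
      have hWB : W < B := hgtN_lt hm (by omega)
      have hWW1 : W < W1 := hgtN_lt hm (by omega)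
      have hW1A : W1 ≤ A := hgtN_le _ _ hwxl
      have hW1B : W1 ≤ B := hgtN_le _ _ hwyl
      -- chord on the x-side down to the child w ++ [a0]
      have QA := lemA hm hu x.length x w (w ++ [a0]) le_rfl ⟨[a0], rfl⟩ hw1x
      rw [lw1] at QA
      -- chord on the y-side down to the child w ++ [b0]
      have QC := lemA hm hu y.length y w (w ++ [b0]) le_rfl ⟨[b0], rfl⟩ hw2y
      rw [lw2] at QC
      -- the sibling inequality at w
      have hsib := (hu w).1 a0 b0 ha0b0
      have hQB : u w * (W1 - (2*W - W1)) ≤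
          u (w ++ [a0]) * (W1 - W) + u (w ++ [b0]) * (W - (2*W - W1)) := by
        nlinarith [mul_le_mul_of_nonneg_right hsib (by linarith : (0:ℝ) ≤ W1 - W)]
      have QD : u w * (W1 - (2*W - A)) ≤
          u x * (W1 - W) + u (w ++ [b0]) * (W - (2*W - A)) :=
        qcomp2 (p := 2*W - A) (q := 2*W - W1) (r := W) (s := W1)
          (fp := u x) (fq := u (w ++ [a0])) (fr := u w) (fs := u (w ++ [b0]))
          (by linarith) (by linarith) (by linarith) (by linarith [QA]) hQB
      have QE : u w * (B - (2*W - A)) ≤ u x * (B - W) + u y * (W - (2*W - A)) :=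
        qcomp3 (p := 2*W - A) (q := W) (r := W1) (s := B)
          (fp := u x) (fq := u w) (fr := u (w ++ [b0])) (fs := u y)
          (by linarith) (by linarith) (by linarith) QD (by linarith [QC])
      obtain ⟨c, hc⟩ := hz1
      have hWCle : w.length ≤ z.length := by
        rw [← hc]; simp
      have hWC : W ≤ hgtN m z.length := hgtN_le _ _ hWCle
      rcases hz2 with hzx | hzy
      · -- z on the x-side
        set C := hgtN m z.length with hC
        have hCA : C ≤ A := hgtN_le _ _ hzx.length_le
        have hlxz : lcp x z = z := by
          obtain ⟨t, rfl⟩ := hzx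
          exact lcp_append_self z t
        have hlyz : lcp y z = w := by
          rcases c with _ | ⟨c0, c'⟩
          · rw [← hb, ← hc, lcp_append, lcp_nil_right, List.append_nil]
          · have hca : (c0 :: c') <+: (a0 :: a') :=
              (List.prefix_append_right_inj w).mp (by rw [hc, ha]; exact hzx)
            have hc0 : c0 = a0 := (List.cons_prefix_cons.mp hca).1
            rw [← hb, ← hc, lcp_append, lcp_cons,
              if_neg (by rw [hc0]; exact ha0b0.symm), List.append_nil]
        have QF := lemA hm hu x.length x w z le_rfl ⟨c, hc⟩ hzx
        have bigQ : u z * (B - (2*W - A)) ≤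
            u x * (B - (2*W - C)) + u y * ((2*W - C) - (2*W - A)) :=
          qcomp1 (p := 2*W - A) (q := 2*W - C) (r := W) (s := B)
            (fp := u x) (fq := u z) (fr := u w) (fs := u y)
            (by linarith) (by linarith) (by linarith) (by linarith)
            (by linarith [QF]) QE
        have e1 : treeDist x y = A + B - 2*W := by
          rw [treeDist_eq, ← hw]; try ring
        have e2 : treeDist x z = A - C := by
          rw [treeDist_eq, hlxz]; try ring
        have e3 : treeDist y z = B + C - 2*W := by
          rw [treeDist_eq, hlyz]; try ring
        rw [e1, e2, e3]
        constructor
        · linarith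
        · linarith
      · -- z on the y-side
        set C := hgtN m z.length with hC
        have hCB : C ≤ B := hgtN_le _ _ hzy.length_le
        have hlyz : lcp y z = z := by
          obtain ⟨t, rfl⟩ := hzy
          exact lcp_append_self z t
        have hlxz : lcp x z = w := by
          rcases c with _ | ⟨c0, c'⟩
          · rw [← ha, ← hc, lcp_append, lcp_nil_right, List.append_nil]
          · have hcb : (c0 :: c') <+: (b0 :: b') :=
              (List.prefix_append_right_inj w).mp (by rw [hc, hb]; exact hzy)
            have hc0 : c0 = b0 := (List.cons_prefix_cons.mp hcb).1
            rw [← ha, ← hc, lcp_append, lcp_cons,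
              if_neg (by rw [hc0]; exact ha0b0), List.append_nil]
        have QF := lemA hm hu y.length y w z le_rfl ⟨c, hc⟩ hzy
        have bigQ : u z * (B - (2*W - A)) ≤
            u x * (B - C) + u y * (C - (2*W - A)) :=
          qcomp4 (p := 2*W - A) (q := W) (r := C) (s := B)
            (fp := u x) (fq := u w) (fr := u z) (fs := u y)
            (by linarith) (by linarith) (by linarith) QE (by linarith [QF])
        have e1 : treeDist x y = A + B - 2*W := by
          rw [treeDist_eq, ← hw]; try ring
        have e2 : treeDist x z = A + C - 2*W := by
          rw [treeDist_eq, hlxz]; try ring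
        have e3 : treeDist y z = B - C := by
          rw [treeDist_eq, hlyz]; try ring
        rw [e1, e2, e3]
        constructor
        · linarith
        · linarith
  · -- ConvexT → LocConvex
    intro hC x
    constructor
    · intro i j hij
      have hxy : x ++ [i] ≠ x ++ [j] := by
        simp [hij]
      have hl : lcp (x ++ [i]) (x ++ [j]) = x := by
        rw [lcp_append, lcp_cons, if_neg hij, List.append_nil]
      have hpath : OnPath x (x ++ [i]) (x ++ [j]) :=
        ⟨by rw [hl], Or.inl ⟨[i], rfl⟩⟩
      have h := hC _ _ _ hxy hpath
      have hli : (x ++ [i]).length = x.length + 1 := by simp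
      have hlj : (x ++ [j]).length = x.length + 1 := by simp
      have e1 : treeDist (x ++ [i]) (x ++ [j]) = 2 * (1 / (m:ℝ) ^ (x.length + 1)) := by
        rw [treeDist_eq, hl, hli, hlj, hgtN_succ]; try ring
      have e2 : treeDist (x ++ [j]) x = 1 / (m:ℝ) ^ (x.length + 1) := by
        rw [treeDist_eq, lcp_append_self, hlj, hgtN_succ]; try ring
      have e3 : treeDist (x ++ [i]) x = 1 / (m:ℝ) ^ (x.length + 1) := by
        rw [treeDist_eq, lcp_append_self, hli, hgtN_succ]; try ring
      rw [e1, e2, e3] at h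
      have hδ : (0:ℝ) < 1 / (m:ℝ) ^ (x.length + 1) := by positivity
      have hhalf : (1 / (m:ℝ) ^ (x.length + 1)) / (2 * (1 / (m:ℝ) ^ (x.length + 1))) = 1/2 := by
        rw [div_eq_iff (by linarith)]
        ring
      rw [hhalf] at h
      linarith
    · intro hx i
      have hXx : x.dropLast ++ [x.getLast hx] = x := List.dropLast_append_getLast hx
      obtain ⟨k, hk⟩ : ∃ k, x.length = k + 1 := by
        cases x with
        | nil => exact absurd rfl hx
        | cons a t => exact ⟨t.length, rfl⟩
      have hXpre : x.dropLast <+: x := List.dropLast_prefix x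
      have hXY : x.dropLast <+: x ++ [i] := hXpre.trans ⟨[i], rfl⟩
      have hne : x.dropLast ≠ x ++ [i] := by
        intro e
        have h2 := congrArg List.length e
        simp [List.length_dropLast, hk] at h2
        omega
      have hl : lcp x.dropLast (x ++ [i]) = x.dropLast := by
        obtain ⟨t, ht⟩ := hXY
        rw [← ht]
        exact lcp_self_append _ t
      have hpath : OnPath x x.dropLast (x ++ [i]) :=
        ⟨by rw [hl]; exact hXpre, Or.inr ⟨[i], rfl⟩⟩
      have h := hC _ _ _ hne hpath
      have hlX : x.dropLast.length = k := by
        rw [List.length_dropLast, hk]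
        omega
      have hlY : (x ++ [i]).length = k + 2 := by
        simp [hk]
      have hlYx : lcp (x ++ [i]) x = x := lcp_append_self x [i]
      have hlXx : lcp x.dropLast x = x.dropLast := by
        obtain ⟨t, ht⟩ := hXpre
        have h3 := lcp_self_append x.dropLast t
        rw [ht] at h3
        exact h3
      set M := (m:ℝ) with hMdef
      have hM0 : (0:ℝ) < M := by linarith
      have e1 : treeDist x.dropLast (x ++ [i]) = 1 / M ^ (k + 1) + 1 / M ^ (k + 2) := by
        rw [treeDist_eq, hl, hlX, hlY, hgtN_succ, hgtN_succ]; try ring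
      have e2 : treeDist (x ++ [i]) x = 1 / M ^ (k + 2) := by
        rw [treeDist_eq, hlYx, hlY, hk, hgtN_succ]; try ring
      have e3 : treeDist x.dropLast x = 1 / M ^ (k + 1) := by
        rw [treeDist_eq, hlXx, hlX, hk, hgtN_succ]; try ring
      rw [e1, e2, e3] at h
      have hDval : 1 / M ^ (k + 1) + 1 / M ^ (k + 2) = (M + 1) / M ^ (k + 2) := by
        field_simp
        ring
      have hp : M ^ (k + 2) ≠ 0 := ne_of_gt (by positivity)
      have hp1 : M ^ (k + 1) ≠ 0 := ne_of_gt (by positivity)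
      have hm1 : M + 1 ≠ 0 := by linarith
      have c1 : (1 / M ^ (k + 2)) / (1 / M ^ (k + 1) + 1 / M ^ (k + 2)) = 1 / (M + 1) := by
        rw [hDval]
        field_simp
      have c2 : (1 / M ^ (k + 1)) / (1 / M ^ (k + 1) + 1 / M ^ (k + 2)) = M / (M + 1) := by
        rw [hDval]
        field_simp
        ring
      rw [c1, c2] at h
      have : (u x.dropLast + M * u (x ++ [i])) / (M + 1) =
          1 / (M + 1) * u x.dropLast + M / (M + 1) * u (x ++ [i]) := by
        ring
      rw [this]
      exact h
end

section
/- Comparison principle: let u, v: T_m → ℝ be bounded functions such that for every vertex x, u(x) ≥ min{ min over distinct successors y,z of (u(y)+u(z))/2 ; min over successors y of (u(x̂)+m·u(y))/(m+1) } and v(x) ≤ min{ min over distinct successors y,z of (v(y)+v(z))/2 ; min over successors y of (v(x̂)+m·v(y))/(m+1) } (predecessor terms omitted at the root). If along every branch π, limsup of v ≤ liminf of u, then u(x) ≥ v(x) for every vertex x ∈ T_m. -/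
open Filter Finset

variable {m : ℕ}

/-!
Put `w = v - u` and suppose `S = sup w > 0`. The supersolution inequality for `u` is attained by
one of the averages in `opMin`, while `v` satisfies the opposite inequality for every average;
subtracting, every vertex `x` has a successor `y` with `w y ≥ w x + min 0 ((w x - w x̂) / m)`.
Following such successors from a vertex `x₀` with `w x₀ > S / 2`, the `k`-th step lowers `w` by
at most `(S - w x₀) / m ^ k`, so `w ≥ 2 w x₀ - S > 0` along the resulting branch, against
`limsup v ≤ liminf u` there.
-/

def binAvgs (u : V m → ℝ) (x : V m) : Set ℝ :=
  {r | ∃ i j : Fin m, i ≠ j ∧ r = (u (x ++ [i]) + u (x ++ [j])) / 2}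

def predAvgs (u : V m → ℝ) (x : V m) : Set ℝ :=
  {r | ∃ i : Fin m, r = (u x.dropLast + (m : ℝ) * u (x ++ [i])) / ((m : ℝ) + 1)}

lemma binAvgs_finite (u : V m → ℝ) (x : V m) : (binAvgs u x).Finite :=
  (Set.finite_range fun p : Fin m × Fin m => (u (x ++ [p.1]) + u (x ++ [p.2])) / 2).subset <| by
    rintro _ ⟨i, j, -, rfl⟩
    exact ⟨(i, j), rfl⟩

lemma predAvgs_finite (u : V m → ℝ) (x : V m) : (predAvgs u x).Finite :=
  (Set.finite_range fun i : Fin m =>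
    (u x.dropLast + (m : ℝ) * u (x ++ [i])) / ((m : ℝ) + 1)).subset <| by
    rintro _ ⟨i, rfl⟩
    exact ⟨i, rfl⟩

lemma opMin_le_binAvg (u : V m → ℝ) (x : V m) {i j : Fin m} (hij : i ≠ j) :
    opMin u x ≤ (u (x ++ [i]) + u (x ++ [j])) / 2 := by
  have hbin : binMin u x ≤ _ := csInf_le (binAvgs_finite u x).bddBelow ⟨i, j, hij, rfl⟩
  unfold opMin
  split_ifs
  · exact hbin
  · exact (min_le_left _ _).trans hbin

lemma opMin_le_predAvg (u : V m → ℝ) {x : V m} (hx : x ≠ []) (i : Fin m) :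
    opMin u x ≤ (u x.dropLast + (m : ℝ) * u (x ++ [i])) / ((m : ℝ) + 1) := by
  rw [opMin, if_neg hx]
  exact (min_le_right _ _).trans (csInf_le (predAvgs_finite u x).bddBelow ⟨i, rfl⟩)

lemma locConvex_of_le_opMin {v : V m → ℝ} (hv : ∀ x, v x ≤ opMin v x) : LocConvex v :=
  fun x => ⟨fun _ _ hij => (hv x).trans (opMin_le_binAvg v x hij),
    fun hx i => (hv x).trans (opMin_le_predAvg v hx i)⟩

lemma exists_avg_le_of_opMin_le (hm : 2 ≤ m) {u : V m → ℝ} {x : V m}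
    (hu : opMin u x ≤ u x) :
    (∃ i j : Fin m, i ≠ j ∧ (u (x ++ [i]) + u (x ++ [j])) / 2 ≤ u x) ∨
      (x ≠ [] ∧ ∃ i : Fin m,
        (u x.dropLast + (m : ℝ) * u (x ++ [i])) / ((m : ℝ) + 1) ≤ u x) := by
  obtain ⟨i, j, hij, hbin⟩ : binMin u x ∈ binAvgs u x :=
    Set.Nonempty.csInf_mem ⟨_, ⟨0, by omega⟩, ⟨1, by omega⟩, by simp [Fin.ext_iff], rfl⟩
      (binAvgs_finite u x)
  by_cases hx : x = []
  · rw [opMin, if_pos hx, hbin] at hu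
    exact .inl ⟨i, j, hij, hu⟩
  rw [opMin, if_neg hx, min_le_iff, hbin] at hu
  rcases hu with hu | hu
  · exact .inl ⟨i, j, hij, hu⟩
  obtain ⟨k, hk⟩ : sInf (predAvgs u x) ∈ predAvgs u x :=
    Set.Nonempty.csInf_mem ⟨_, ⟨0, by omega⟩, rfl⟩ (predAvgs_finite u x)
  exact .inr ⟨hx, k, hk ▸ hu⟩

lemma exists_succ_sub_ge (hm : 2 ≤ m) {u v : V m → ℝ} {x : V m} (hu : opMin u x ≤ u x)
    (hv : LocConvex v) :
    ∃ i : Fin m,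
      (v - u) x + min 0 (((v - u) x - (v - u) x.dropLast) / m) ≤ (v - u) (x ++ [i]) := by
  simp only [Pi.sub_apply]
  have hm' : (2 : ℝ) ≤ m := by exact_mod_cast hm
  rcases exists_avg_le_of_opMin_le hm hu with ⟨i, j, hij, hui⟩ | ⟨hx, i, hui⟩
  · have hvi := (hv x).1 i j hij
    have hmin := min_le_left (0 : ℝ) ((v x - u x - (v x.dropLast - u x.dropLast)) / m)
    by_cases hi : v x - u x ≤ v (x ++ [i]) - u (x ++ [i])
    · exact ⟨i, by linarith⟩
    · exact ⟨j, by linarith⟩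
  · have hvi := (hv x).2 hx i
    rw [div_le_iff₀ (by linarith)] at hui
    rw [le_div_iff₀ (by linarith)] at hvi
    refine ⟨i, ?_⟩
    have hdiff : (v x - u x - (v x.dropLast - u x.dropLast)) / m ≤
        v (x ++ [i]) - u (x ++ [i]) - (v x - u x) := by
      rw [div_le_iff₀ (by linarith)]
      linarith
    linarith [min_le_right (0 : ℝ) ((v x - u x - (v x.dropLast - u x.dropLast)) / m)]

lemma bvert_succ (π : ℕ → Fin m) (n : ℕ) : bvert π (n + 1) = bvert π n ++ [π n] := by
  rw [bvert, bvert, List.ofFn_succ']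
  simp [List.concat_eq_append]

lemma exists_bvert_length_add_eq (x₀ : V m) (f : V m → Fin m) :
    ∃ π : ℕ → Fin m, ∀ k, bvert π (x₀.length + k) = (fun y => y ++ [f y])^[k] x₀ := by
  refine ⟨fun n => if h : n < x₀.length then x₀.get ⟨n, h⟩
    else f ((fun y => y ++ [f y])^[n - x₀.length] x₀), fun k => ?_⟩
  induction k with
  | zero => exact List.ext_get (by simp [bvert]) fun n h _ => by simp [bvert]
  | succ k ih =>
    rw [← add_assoc, bvert_succ, ih, Function.iterate_succ_apply']
    simp

lemma two_mul_sub_le_of_step {a p : ℕ → ℝ} {c S : ℝ} (hc : 2 ≤ c) (ha0 : a 0 ≤ S)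
    (hp0 : p 0 ≤ S) (hp : ∀ k, p (k + 1) = a k)
    (hstep : ∀ k, a k + min 0 ((a k - p k) / c) ≤ a (k + 1)) (k : ℕ) :
    2 * a 0 - S ≤ a k := by
  set δ := S - a 0
  have hδ : 0 ≤ δ := by linarith
  have hc0 : 0 < c := by linarith
  have hmin : ∀ k, -(δ / c ^ k) ≤ a k - p k →
      -(δ / c ^ (k + 1)) ≤ min 0 ((a k - p k) / c) := by
    intro k h
    refine le_min (neg_nonpos.2 (by positivity)) ?_
    rw [pow_succ, ← div_div, ← neg_div]
    exact div_le_div_of_nonneg_right h hc0.le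
  have hdrop : ∀ k, -(δ / c ^ k) ≤ a k - p k := by
    intro k
    induction k with
    | zero => simp only [pow_zero, div_one]; linarith
    | succ k ih => rw [hp]; linarith [hmin k ih, hstep k]
  have hlow : ∀ k, a 0 - δ + δ / c ^ k ≤ a k := by
    intro k
    induction k with
    | zero => simp
    | succ k ih =>
      have hhalf : δ / c ^ k / c ≤ δ / c ^ k / 2 :=
        div_le_div_of_nonneg_left (by positivity) (by norm_num) hc
      have hk := hmin k (hdrop k)
      rw [pow_succ, ← div_div] at hk ⊢
      linarith [hstep k]
  linarith [hlow k, div_nonneg hδ (pow_nonneg hc0.le k)]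

lemma exists_branch_sub_ge (hm : 2 ≤ m) {u v : V m → ℝ} (hu : ∀ x, opMin u x ≤ u x)
    (hv : LocConvex v) {S : ℝ} (hS : ∀ x, (v - u) x ≤ S) (x₀ : V m) :
    ∃ π : ℕ → Fin m, ∀ k ≥ x₀.length,
      2 * (v - u) x₀ - S ≤ (v - u) (bvert π k) := by
  choose f hf using fun x => exists_succ_sub_ge hm (hu x) hv
  obtain ⟨π, hπ⟩ := exists_bvert_length_add_eq x₀ f
  set X : ℕ → V m := fun k => (fun y => y ++ [f y])^[k] x₀
  have hX : ∀ k, X (k + 1) = X k ++ [f (X k)] := fun k => Function.iterate_succ_apply' _ _ _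
  refine ⟨π, fun k hk => ?_⟩
  obtain ⟨k, rfl⟩ := Nat.exists_eq_add_of_le hk
  rw [hπ]
  exact two_mul_sub_le_of_step (a := fun k => (v - u) (X k))
    (p := fun k => (v - u) (X k).dropLast) (by exact_mod_cast hm) (hS _) (hS _)
    (fun k => by simp only [hX, List.dropLast_concat]) (fun k => hX k ▸ hf (X k)) k

lemma nonpos_of_eventually_le_sub {ι : Type*} {l : Filter ι} [l.NeBot] {f g : ι → ℝ}
    (hf : IsBoundedUnder (· ≤ ·) l f) (hg : IsBoundedUnder (· ≥ ·) l g)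
    (h : limsup f l ≤ liminf g l) {η : ℝ} (hη : ∀ᶠ i in l, η ≤ f i - g i) :
    η ≤ 0 := by
  by_contra! hη0
  have hfL : ∀ᶠ i in l, f i < liminf g l + η / 2 :=
    eventually_lt_of_limsup_lt (by linarith) hf
  have hgL : ∀ᶠ i in l, liminf g l - η / 2 < g i :=
    eventually_lt_of_lt_liminf (by linarith) hg
  obtain ⟨i, hi, hfi, hgi⟩ := (hη.and (hfL.and hgL)).exists
  linarith

/-- comparison principle for the convexity operator. -/
theorem stmt5 (m : ℕ) (hm : 2 ≤ m) (u v : V m → ℝ)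
    (hub : ∃ C : ℝ, ∀ x : V m, |u x| ≤ C)
    (hvb : ∃ C : ℝ, ∀ x : V m, |v x| ≤ C)
    (hu : ∀ x : V m, opMin u x ≤ u x)
    (hv : ∀ x : V m, v x ≤ opMin v x)
    (hbd : ∀ π : ℕ → Fin m,
      Filter.limsup (fun k => v (bvert π k)) Filter.atTop ≤
        Filter.liminf (fun k => u (bvert π k)) Filter.atTop) :
    ∀ x : V m, v x ≤ u x := by
  obtain ⟨Cu, hCu⟩ := hub
  obtain ⟨Cv, hCv⟩ := hvb
  have hw : BddAbove (Set.range (v - u)) := ⟨Cv + Cu, by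
    rintro _ ⟨x, rfl⟩
    linarith [abs_le.1 (hCu x), abs_le.1 (hCv x), Pi.sub_apply v u x]⟩
  by_contra! ⟨x, hx⟩
  set S := ⨆ x, (v - u) x
  have hS : ∀ x, (v - u) x ≤ S := le_ciSup hw
  obtain ⟨x₀, hx₀⟩ : ∃ x₀, S / 2 < (v - u) x₀ :=
    exists_lt_of_lt_ciSup (by linarith [hS x, Pi.sub_apply v u x])
  obtain ⟨π, hπ⟩ := exists_branch_sub_ge hm hu (locConvex_of_le_opMin hv) hS x₀
  have hnonpos := nonpos_of_eventually_le_sub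
    (isBoundedUnder_of ⟨Cv, fun k => (abs_le.1 (hCv (bvert π k))).2⟩)
    (isBoundedUnder_of ⟨-Cu, fun k => (abs_le.1 (hCu (bvert π k))).1⟩)
    (hbd π) (eventually_atTop.2 ⟨_, hπ⟩)
  linarith
end

section
/- For a continuous function g: [0,1] → ℝ, there exists a unique function u: T_m → ℝ satisfying u(x) = min{ min over distinct successors y,z of (u(y)+u(z))/2 ; min over successors y of (u(x̂)+m·u(y))/(m+1) } at every vertex (predecessor term omitted at the root) such that along every branch π, lim u(y_k) = g(ψ(π)). -/
open Filter Finset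

variable {m : ℕ}

section Aux
variable {m : ℕ}

namespace Stmt10

/-- arbitrary distinct indices -/
def i₀ (hm : 2 ≤ m) : Fin m := ⟨0, by omega⟩
def i₁ (hm : 2 ≤ m) : Fin m := ⟨1, by omega⟩

lemma i₀_ne_i₁ (hm : 2 ≤ m) : i₀ hm ≠ i₁ hm := by
  simp [i₀, i₁, Fin.ext_iff]

lemma binMin_set_finite (u : V m → ℝ) (x : V m) :
    {r | ∃ i j : Fin m, i ≠ j ∧ r = (u (x ++ [i]) + u (x ++ [j])) / 2}.Finite := by
  have : {r | ∃ i j : Fin m, i ≠ j ∧ r = (u (x ++ [i]) + u (x ++ [j])) / 2}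
      ⊆ (fun p : Fin m × Fin m => (u (x ++ [p.1]) + u (x ++ [p.2])) / 2) '' Set.univ := by
    rintro r ⟨i, j, _, rfl⟩; exact ⟨(i, j), trivial, rfl⟩
  exact Set.Finite.subset (Set.finite_univ.image _) this

lemma binMin_set_nonempty (hm : 2 ≤ m) (u : V m → ℝ) (x : V m) :
    {r | ∃ i j : Fin m, i ≠ j ∧ r = (u (x ++ [i]) + u (x ++ [j])) / 2}.Nonempty :=
  ⟨_, i₀ hm, i₁ hm, i₀_ne_i₁ hm, rfl⟩

lemma binMin_le (hm : 2 ≤ m) (u : V m → ℝ) (x : V m) {i j : Fin m} (hij : i ≠ j) :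
    binMin u x ≤ (u (x ++ [i]) + u (x ++ [j])) / 2 :=
  csInf_le (binMin_set_finite u x).bddBelow ⟨i, j, hij, rfl⟩

lemma exists_binMin_eq (hm : 2 ≤ m) (u : V m → ℝ) (x : V m) :
    ∃ i j : Fin m, i ≠ j ∧ binMin u x = (u (x ++ [i]) + u (x ++ [j])) / 2 :=
  (binMin_set_nonempty hm u x).csInf_mem (binMin_set_finite u x)

lemma le_binMin (hm : 2 ≤ m) (u : V m → ℝ) (x : V m) (c : ℝ)
    (h : ∀ i j : Fin m, i ≠ j → c ≤ (u (x ++ [i]) + u (x ++ [j])) / 2) :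
    c ≤ binMin u x :=
  le_csInf (binMin_set_nonempty hm u x) (by rintro r ⟨i, j, hij, rfl⟩; exact h i j hij)

lemma pMin_set_finite (u : V m → ℝ) (x : V m) :
    {r | ∃ i : Fin m, r = (u x.dropLast + (m : ℝ) * u (x ++ [i])) / ((m : ℝ) + 1)}.Finite := by
  have : {r | ∃ i : Fin m, r = (u x.dropLast + (m : ℝ) * u (x ++ [i])) / ((m : ℝ) + 1)}
      ⊆ (fun i : Fin m => (u x.dropLast + (m : ℝ) * u (x ++ [i])) / ((m : ℝ) + 1)) '' Set.univ := by
    rintro r ⟨i, rfl⟩; exact ⟨i, trivial, rfl⟩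
  exact Set.Finite.subset (Set.finite_univ.image _) this

lemma pMin_set_nonempty (hm : 2 ≤ m) (u : V m → ℝ) (x : V m) :
    {r | ∃ i : Fin m, r = (u x.dropLast + (m : ℝ) * u (x ++ [i])) / ((m : ℝ) + 1)}.Nonempty :=
  ⟨_, i₀ hm, rfl⟩

lemma opMin_le_pair (hm : 2 ≤ m) (u : V m → ℝ) (x : V m) {i j : Fin m} (hij : i ≠ j) :
    opMin u x ≤ (u (x ++ [i]) + u (x ++ [j])) / 2 := by
  unfold opMin
  split
  · exact binMin_le hm u x hij
  · exact le_trans (min_le_left _ _) (binMin_le hm u x hij)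

lemma opMin_le_parent (hm : 2 ≤ m) (u : V m → ℝ) (x : V m) (hx : x ≠ []) (i : Fin m) :
    opMin u x ≤ (u x.dropLast + (m : ℝ) * u (x ++ [i])) / ((m : ℝ) + 1) := by
  unfold opMin
  rw [if_neg hx]
  exact le_trans (min_le_right _ _)
    (csInf_le (pMin_set_finite u x).bddBelow ⟨i, rfl⟩)

lemma le_opMin (hm : 2 ≤ m) (u : V m → ℝ) (x : V m) (c : ℝ)
    (h1 : ∀ i j : Fin m, i ≠ j → c ≤ (u (x ++ [i]) + u (x ++ [j])) / 2)
    (h2 : x ≠ [] → ∀ i : Fin m, c ≤ (u x.dropLast + (m : ℝ) * u (x ++ [i])) / ((m : ℝ) + 1)) :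
    c ≤ opMin u x := by
  unfold opMin
  split_ifs with hx
  · exact le_binMin hm u x c h1
  · refine le_min (le_binMin hm u x c h1) ?_
    exact le_csInf (pMin_set_nonempty hm u x) (by rintro r ⟨i, rfl⟩; exact h2 hx i)

/-- the minimum is attained at some "option". -/
lemma opMin_attained (hm : 2 ≤ m) (u : V m → ℝ) (x : V m) :
    (∃ i j : Fin m, i ≠ j ∧ opMin u x = (u (x ++ [i]) + u (x ++ [j])) / 2) ∨
    (x ≠ [] ∧ ∃ i : Fin m,
      opMin u x = (u x.dropLast + (m : ℝ) * u (x ++ [i])) / ((m : ℝ) + 1)) := by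
  unfold opMin
  split_ifs with hx
  · exact Or.inl (exists_binMin_eq hm u x)
  · rcases le_total (binMin u x)
      (sInf {r | ∃ i : Fin m, r = (u x.dropLast + (m : ℝ) * u (x ++ [i])) / ((m : ℝ) + 1)}) with h | h
    · rw [min_eq_left h]
      exact Or.inl (exists_binMin_eq hm u x)
    · rw [min_eq_right h]
      right
      refine ⟨hx, ?_⟩
      have := (pMin_set_nonempty hm u x).csInf_mem (pMin_set_finite u x)
      exact this

lemma opMin_mono (hm : 2 ≤ m) {u u' : V m → ℝ} (h : ∀ z, u z ≤ u' z) (x : V m) :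
    opMin u x ≤ opMin u' x := by
  rcases opMin_attained hm u' x with ⟨i, j, hij, he⟩ | ⟨hx, i, he⟩
  · rw [he]
    refine le_trans (opMin_le_pair hm u x hij) ?_
    have := h (x ++ [i]); have := h (x ++ [j]); linarith
  · rw [he]
    refine le_trans (opMin_le_parent hm u x hx i) ?_
    have h1 := h x.dropLast; have h2 := h (x ++ [i])
    have hm0 : (0:ℝ) ≤ (m:ℝ) := Nat.cast_nonneg m
    exact div_le_div_of_nonneg_right (by nlinarith) (by positivity)

end Stmt10
end Aux
section AuxB
variable {m : ℕ}
namespace Stmt10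

lemma psiV_nil : psiV ([] : V m) = 0 := by simp [psiV]

lemma psiV_cons (a : Fin m) (x : V m) :
    psiV (a :: x) = (a : ℝ) / m + psiV x / m := by
  have h0 : psiV (a :: x) = ∑ k : Fin (x.length + 1),
      (((a :: x).get k : Fin m) : ℝ) / (m : ℝ) ^ ((k : ℕ) + 1) := rfl
  rw [h0, Fin.sum_univ_succ, psiV, Finset.sum_div]
  congr 1
  · norm_num
  · refine Finset.sum_congr rfl fun k _ => ?_
    rw [div_div, ← pow_succ]
    rfl

lemma psiV_append (x : V m) (i : Fin m) :
    psiV (x ++ [i]) = psiV x + (i : ℝ) / (m : ℝ) ^ (x.length + 1) := by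
  induction x with
  | nil => simp [psiV_nil, psiV_cons, psiV]
  | cons a x ih =>
      rw [List.cons_append, psiV_cons, ih, psiV_cons]
      rw [show (a :: x).length = x.length + 1 from rfl]
      rw [add_div, div_div, ← pow_succ]
      ring

lemma length_bvert (π : ℕ → Fin m) (k : ℕ) : (bvert π k).length = k := by
  simp [bvert]

lemma bvert_succ (π : ℕ → Fin m) (k : ℕ) :
    bvert π (k + 1) = bvert π k ++ [π k] := by
  unfold bvert
  rw [List.ofFn_succ']
  simp [List.concat_eq_append]

lemma psiV_bvert (π : ℕ → Fin m) (k : ℕ) :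
    psiV (bvert π k) = ∑ j ∈ Finset.range k, (π j : ℝ) / (m : ℝ) ^ (j + 1) := by
  induction k with
  | zero => simp [bvert, psiV_nil]
  | succ k ih =>
      rw [bvert_succ, psiV_append, length_bvert, Finset.sum_range_succ, ih]

section mtwo
variable (hm : 2 ≤ m)
include hm

lemma hm1R : (1 : ℝ) < (m : ℝ) := by exact_mod_cast hm.trans_lt' one_lt_two |>.trans_le le_rfl

lemma hm0R : (0 : ℝ) < (m : ℝ) := lt_trans one_pos (hm1R hm)

lemma branch_summable (π : ℕ → Fin m) :
    Summable (fun j : ℕ => (π j : ℝ) / (m : ℝ) ^ (j + 1)) := by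
  have h0 : (0:ℝ) < m := hm0R hm
  refine Summable.of_nonneg_of_le (fun j => by positivity) (fun j => ?_)
    (summable_geometric_of_lt_one (by positivity) (by
      rw [div_lt_one h0]; exact hm1R hm) (r := 1 / (m:ℝ)))
  have hπ : ((π j : ℕ) : ℝ) ≤ (m : ℝ) - 1 := by
    have := π j |>.isLt
    have : ((π j : ℕ) : ℝ) ≤ (m : ℝ) - 1 := by
      rw [le_sub_iff_add_le]
      exact_mod_cast Nat.succ_le_of_lt (π j).isLt
    exact this
  rw [div_pow, one_pow]
  rw [div_le_div_iff₀ (by positivity) (by positivity)]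
  calc ((π j : ℕ) : ℝ) * (m:ℝ)^j ≤ ((m:ℝ) - 1) * (m:ℝ)^j := by
        apply mul_le_mul_of_nonneg_right hπ (by positivity)
    _ ≤ 1 * (m:ℝ)^(j+1) := by rw [pow_succ]; nlinarith [pow_pos h0 j]

lemma tail_bound (π : ℕ → Fin m) (k : ℕ) :
    psiV (bvert π k) ≤ psiB m π ∧ psiB m π ≤ psiV (bvert π k) + (1 / (m:ℝ)) ^ k := by
  have hsum := branch_summable hm π
  have h0 : (0:ℝ) < m := hm0R hm
  have hpart := Summable.sum_add_tsum_nat_add k hsum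
  rw [psiV_bvert]
  have hpsiB : psiB m π = (∑ j ∈ Finset.range k, (π j : ℝ) / (m : ℝ) ^ (j + 1))
      + ∑' j : ℕ, (π (j + k) : ℝ) / (m : ℝ) ^ ((j + k) + 1) := by
    rw [psiB, ← hpart]
  constructor
  · rw [hpsiB]
    have : (0:ℝ) ≤ ∑' j : ℕ, (π (j + k) : ℝ) / (m : ℝ) ^ ((j + k) + 1) :=
      tsum_nonneg (fun j => by positivity)
    linarith
  · rw [hpsiB]
    have htail : ∑' j : ℕ, (π (j + k) : ℝ) / (m : ℝ) ^ ((j + k) + 1)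
        ≤ ∑' j : ℕ, ((m:ℝ) - 1) / (m : ℝ) ^ (k + 1) * (1 / (m:ℝ)) ^ j := by
      refine Summable.tsum_le_tsum (fun j => ?_) (hsum.comp_injective (add_left_injective k)) ?_
      · have hπ : ((π (j+k) : ℕ) : ℝ) ≤ (m : ℝ) - 1 := by
          rw [le_sub_iff_add_le]
          exact_mod_cast Nat.succ_le_of_lt (π (j+k)).isLt
        calc (π (j+k) : ℝ) / (m:ℝ)^(j+k+1) ≤ ((m:ℝ)-1) / (m:ℝ)^(j+k+1) :=
              div_le_div_of_nonneg_right hπ (by positivity)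
          _ = ((m:ℝ)-1)/(m:ℝ)^(k+1) * (1/(m:ℝ))^j := by
              rw [div_pow, one_pow, div_mul_div_comm, mul_one,
                show j+k+1 = (k+1)+j by omega, pow_add]
      · apply Summable.mul_left
        exact summable_geometric_of_lt_one (by positivity)
          (by rw [div_lt_one h0]; exact hm1R hm)
    have hgeo : ∑' j : ℕ, ((m:ℝ) - 1) / (m : ℝ) ^ (k + 1) * (1 / (m:ℝ)) ^ j
        = ((m:ℝ) - 1) / (m : ℝ) ^ (k + 1) * (1 - 1/(m:ℝ))⁻¹ := by
      rw [tsum_mul_left, tsum_geometric_of_lt_one (by positivity)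
        (by rw [div_lt_one h0]; exact hm1R hm)]
    have hfin : ((m:ℝ) - 1) / (m : ℝ) ^ (k + 1) * (1 - 1/(m:ℝ))⁻¹ = (1/(m:ℝ))^k := by
      have hm1 : (m:ℝ) - 1 ≠ 0 := by nlinarith [hm1R hm]
      have hmne : (m:ℝ) ≠ 0 := ne_of_gt h0
      rw [div_pow, one_pow]
      field_simp
      ring
    rw [hgeo, hfin] at htail
    linarith

lemma psiB_mem_Icc (π : ℕ → Fin m) : psiB m π ∈ Set.Icc (0:ℝ) 1 := by
  have h := tail_bound hm π 0
  simp only [bvert, List.ofFn_zero, psiV_nil, pow_zero] at h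
  exact ⟨h.1, by linarith [h.2]⟩

end mtwo
end Stmt10
end AuxB
section AuxC
variable {m : ℕ}
namespace Stmt10

/-- subsolution class -/
def IsSub (m : ℕ) (g : ℝ → ℝ) (u : V m → ℝ) : Prop :=
  (∀ x, u x ≤ opMin u x) ∧
  ∀ (π : ℕ → Fin m) (ε : ℝ), 0 < ε →
    ∀ᶠ k in Filter.atTop, u (bvert π k) ≤ g (psiB m π) + ε

/-- supersolution class -/
def IsSup (m : ℕ) (g : ℝ → ℝ) (v : V m → ℝ) : Prop :=
  (∀ x, opMin v x ≤ v x) ∧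
  ∀ (π : ℕ → Fin m) (ε : ℝ), 0 < ε →
    ∀ᶠ k in Filter.atTop, g (psiB m π) - ε ≤ v (bvert π k)

/-- geometric weight -/
noncomputable def rr (m : ℕ) : ℝ := ((m : ℝ) + 1) / (2 * m)

section mtwo
variable (hm : 2 ≤ m)
include hm

lemma rr_pos : 0 < rr m := by
  have := hm0R hm; unfold rr; positivity

lemma rr_lt_one : rr m < 1 := by
  have := hm1R hm; have := hm0R hm
  rw [rr, div_lt_one (by linarith)]; linarith

lemma one_lt_m_rr : 1 < (m : ℝ) * rr m := by
  have h1 := hm1R hm; have h0 := hm0R hm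
  rw [rr, mul_div_assoc']
  rw [lt_div_iff₀ (by linarith)]
  nlinarith

lemma exists_step {u v : V m → ℝ}
    (hu1 : ∀ x, u x ≤ opMin u x) (hv1 : ∀ x, opMin v x ≤ v x)
    (η : ℝ) (hη : 0 < η) (z : V m) :
    ∃ z' : V m, ((∃ i : Fin m, z' = z ++ [i]) ∨
        (∃ (y : V m) (i : Fin m), z = y ++ [i] ∧ z' = y)) ∧
      u z - v z - η * rr m ^ z.length < u z' - v z' - η * rr m ^ z'.length := by
  have hr0 := rr_pos hm
  have hr1 := rr_lt_one hm
  have hmr := one_lt_m_rr hm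
  have hm0 := hm0R hm
  rcases opMin_attained hm v z with ⟨i, j, hij, he⟩ | ⟨hz, i, he⟩
  · by_contra hcon
    push_neg at hcon
    have hPi := hcon _ (Or.inl ⟨i, rfl⟩)
    have hPj := hcon _ (Or.inl ⟨j, rfl⟩)
    rw [show (z ++ [i]).length = z.length + 1 by simp, pow_succ] at hPi
    rw [show (z ++ [j]).length = z.length + 1 by simp, pow_succ] at hPj
    have hv : (v (z ++ [i]) + v (z ++ [j])) / 2 ≤ v z := he ▸ hv1 z
    have hu : u z ≤ (u (z ++ [i]) + u (z ++ [j])) / 2 :=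
      (hu1 z).trans (opMin_le_pair hm u z hij)
    have ht : 0 < rr m ^ z.length := pow_pos hr0 _
    have hkey : η * (rr m ^ z.length * rr m) < η * rr m ^ z.length := by
      have : rr m ^ z.length * rr m < rr m ^ z.length * 1 := by
        exact mul_lt_mul_of_pos_left hr1 ht
      nlinarith
    linarith
  · by_contra hcon
    push_neg at hcon
    have hzy : z.dropLast ++ [z.getLast hz] = z := List.dropLast_concat_getLast hz
    have hPy := hcon _ (Or.inr ⟨z.dropLast, z.getLast hz, hzy.symm, rfl⟩)
    have hPi := hcon _ (Or.inl ⟨i, rfl⟩)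
    have hlz : z.length = z.dropLast.length + 1 := by
      conv_lhs => rw [← hzy]
      simp
    rw [show (z ++ [i]).length = z.dropLast.length + 2 by simp only [List.length_append, List.length_singleton]; omega] at hPi
    rw [hlz] at hPy hPi
    have hne : (0:ℝ) < (m:ℝ) + 1 := by linarith
    have hu' : ((m:ℝ) + 1) * u z ≤ u z.dropLast + (m:ℝ) * u (z ++ [i]) := by
      have hu : u z ≤ (u z.dropLast + (m : ℝ) * u (z ++ [i])) / ((m : ℝ) + 1) :=
        (hu1 z).trans (opMin_le_parent hm u z hz i)
      rw [le_div_iff₀ hne] at hu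
      linarith
    have hv' : v z.dropLast + (m:ℝ) * v (z ++ [i]) ≤ ((m:ℝ) + 1) * v z := by
      have hv : (v z.dropLast + (m : ℝ) * v (z ++ [i])) / ((m : ℝ) + 1) ≤ v z := he ▸ hv1 z
      rw [div_le_iff₀ hne] at hv
      linarith
    have ht : 0 < rr m ^ z.dropLast.length := pow_pos hr0 _
    have hkey : 1 + (m:ℝ) * rr m ^ 2 < ((m:ℝ) + 1) * rr m := by nlinarith
    have c3 := mul_le_mul_of_nonneg_left hPi (le_of_lt hm0)
    have c4 : η * rr m ^ z.dropLast.length * (1 + (m:ℝ) * rr m ^ 2)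
        < η * rr m ^ z.dropLast.length * (((m:ℝ) + 1) * rr m) := by
      apply mul_lt_mul_of_pos_left hkey (by positivity)
    ring_nf at hPy c3 c4 hu' hv'
    linarith

end mtwo
end Stmt10
end AuxC
section AuxD
variable {m : ℕ}
namespace Stmt10
section mtwo
variable (hm : 2 ≤ m)
include hm

theorem comparison (g : ℝ → ℝ) {u v : V m → ℝ}
    (hsub : IsSub m g u) (hsup : IsSup m g v) : ∀ x, u x ≤ v x := by
  intro x
  refine le_of_forall_pos_le_add fun τ hτ => ?_
  have hη0 : 0 < τ / 2 := by positivity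
  have hε0 : 0 < τ / 4 := by positivity
  have hr0 := rr_pos hm
  have hr1 := rr_lt_one hm
  let P : V m → ℝ := fun z => u z - v z - (τ/2) * rr m ^ z.length
  have hstep := exists_step hm hsub.1 hsup.1 (τ/2) hη0
  choose next hnext hPlt using hstep
  let w : ℕ → V m := fun k => next^[k] x
  have hwsucc : ∀ k, w (k + 1) = next (w k) := fun k => Function.iterate_succ_apply' next k x
  have hPmono : StrictMono (fun k => P (w k)) := by
    apply strictMono_nat_of_lt_succ
    intro n
    rw [hwsucc]
    exact hPlt (w n)
  have hdown_succ : ∀ k, (∃ i : Fin m, w (k+1) = w k ++ [i]) →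
      (∃ i : Fin m, w (k+2) = w (k+1) ++ [i]) := by
    rintro k ⟨i, hi⟩
    rcases hnext (w (k+1)) with ⟨i', hi'⟩ | ⟨y, i', hyi, hy'⟩
    · exact ⟨i', by rw [hwsucc (k+1)]; exact hi'⟩
    · exfalso
      have h1 : y = w k := by
        have h : w k ++ [i] = y ++ [i'] := by rw [← hi, hyi]
        have := congrArg List.dropLast h
        simpa [List.dropLast_concat] using this.symm
      have h2 : w (k + 2) = w k := by rw [hwsucc (k+1), hy', h1]
      have hlt : P (w k) < P (w (k + 2)) := hPmono (show k < k + 2 by omega)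
      rw [h2] at hlt
      exact lt_irrefl _ hlt
  have hdown_ex : ∃ k, ∃ i : Fin m, w (k+1) = w k ++ [i] := by
    by_contra hcon
    push_neg at hcon
    have hdec : ∀ k, (w (k+1)).length + 1 = (w k).length := by
      intro k
      rcases hnext (w k) with ⟨i, hi⟩ | ⟨y, i, hyi, hy'⟩
      · exact absurd (by rw [hwsucc k]; exact hi) (hcon k i)
      · rw [hwsucc k, hy', hyi]; simp
    have hbound : ∀ k, (w k).length + k ≤ (w 0).length := by
      intro k
      induction k with
      | zero => simp
      | succ k ih => have := hdec k; omega
    have := hbound ((w 0).length + 1)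
    omega
  obtain ⟨K, hK⟩ := hdown_ex
  have hdownall : ∀ t, ∃ i : Fin m, w (K + t + 1) = w (K + t) ++ [i] := by
    intro t
    induction t with
    | zero => exact hK
    | succ t ih =>
        have := hdown_succ _ ih
        rwa [show K + t + 2 = K + (t+1) + 1 by omega, show K + t + 1 = K + (t+1) by omega] at this
  have hlen : ∀ t, (w (K + t)).length = (w K).length + t := by
    intro t
    induction t with
    | zero => simp
    | succ t ih =>
        obtain ⟨i, hi⟩ := hdownall t
        rw [show K + (t+1) = K + t + 1 by omega, hi]
        simp [ih]; omega
  have hpre : ∀ t t', t ≤ t' → w (K + t) <+: w (K + t') := by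
    intro t t' htt
    induction t' with
    | zero =>
        have h0 : t = 0 := by omega
        subst h0; exact List.prefix_refl _
    | succ t' ih =>
        rcases Nat.lt_or_ge t (t'+1) with h | h
        · refine (ih (by omega)).trans ?_
          obtain ⟨i, hi⟩ := hdownall t'
          rw [show K + (t'+1) = K + t' + 1 by omega, hi]
          exact List.prefix_append _ _
        · have h1 : t = t' + 1 := by omega
          subst h1; exact List.prefix_refl _
  set L := (w K).length with hL
  let π : ℕ → Fin m := fun j => (w (K + j + 1)).getD j (i₀ hm)
  have hgetD : ∀ t j, j < L + t → (w (K + t)).getD j (i₀ hm) = π j := by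
    intro t j hj
    rcases le_or_gt t (j + 1) with h | h
    · obtain ⟨s, hs⟩ := hpre t (j+1) h
      show _ = (w (K + j + 1)).getD j (i₀ hm)
      rw [show K + j + 1 = K + (j + 1) by omega, ← hs, List.getD_append]
      rw [hlen t]; exact hj
    · obtain ⟨s, hs⟩ := hpre (j+1) t (by omega)
      show _ = (w (K + j + 1)).getD j (i₀ hm)
      rw [show K + j + 1 = K + (j + 1) by omega, ← hs, List.getD_append]
      rw [hlen (j+1)]; omega
  have hbv : ∀ t, bvert π (L + t) = w (K + t) := by
    intro t
    apply List.ext_getElem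
    · rw [length_bvert, hlen]
    · intro n h1 h2
      rw [show (bvert π (L+t))[n] = π n from List.getElem_ofFn _]
      rw [← List.getD_eq_getElem _ (i₀ hm) h2]
      refine (hgetD t n ?_).symm
      rw [hlen] at h2; exact h2
  have hbd1 := hsub.2 π (τ/4) hε0
  have hbd2 := hsup.2 π (τ/4) hε0
  obtain ⟨N, hN⟩ := ((hbd1.and hbd2).and (Filter.eventually_ge_atTop L)).exists_forall_of_atTop
  obtain ⟨⟨h1, h2⟩, h3⟩ := hN N le_rfl
  have hbveq : bvert π N = w (K + (N - L)) := by
    rw [← hbv (N - L)]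
    congr 1
    omega
  have hPx : P x ≤ P (w (K + (N - L))) := by
    have : P (w 0) ≤ P (w (K + (N - L))) := hPmono.monotone (Nat.zero_le _)
    simpa [w] using this
  have hlv : (w (K + (N - L))).length = N := by rw [hlen]; omega
  have hlast : P (w (K + (N - L))) = u (w (K + (N - L))) - v (w (K + (N - L)))
      - (τ/2) * rr m ^ N := by
    show u _ - v _ - (τ/2) * rr m ^ (w (K + (N - L))).length = _
    rw [hlv]
  rw [hbveq] at h1 h2
  have hrx : rr m ^ x.length ≤ 1 := pow_le_one₀ (le_of_lt hr0) (le_of_lt hr1)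
  have hrN : 0 < rr m ^ N := pow_pos hr0 _
  have hPxval : P x = u x - v x - (τ/2) * rr m ^ x.length := rfl
  rw [hlast, hPxval] at hPx
  nlinarith
end mtwo
end Stmt10
end AuxD
section AuxE
variable {m : ℕ}
namespace Stmt10

/-- distance from `t₀` to the interval of a vertex -/
noncomputable def dd (t₀ : ℝ) (x : V m) : ℝ :=
  max (psiV x - t₀) (max (t₀ - psiV x - (1/(m:ℝ)) ^ x.length) 0)

/-- truncated linear profile -/
noncomputable def FF (δ s : ℝ) : ℝ := min 1 (s / δ)

/-- amplitude constant -/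
noncomputable def AA (m : ℕ) (δ : ℝ) : ℝ := 2 * m * ((m:ℝ) + 1) / (((m:ℝ) - 1)^2 * δ)

/-- the barrier profile -/
noncomputable def phi (t₀ δ : ℝ) (x : V m) : ℝ :=
  FF δ (dd t₀ x) + AA m δ * rr m ^ x.length

noncomputable def gap (m : ℕ) (δ : ℝ) (n : ℕ) : ℝ :=
  (2 / ((m:ℝ) + 1)) * AA m δ * rr m ^ n * (1 - rr m)

lemma dd_nonneg (t₀ : ℝ) (x : V m) : 0 ≤ dd t₀ x :=
  le_trans (le_max_right _ _) (le_max_right _ _)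

lemma dd_ge_left (t₀ : ℝ) (x : V m) : psiV x - t₀ ≤ dd t₀ x := le_max_left _ _

lemma dd_ge_right (t₀ : ℝ) (x : V m) : t₀ - psiV x - (1/(m:ℝ)) ^ x.length ≤ dd t₀ x :=
  le_trans (le_max_left _ _) (le_max_right _ _)

lemma dd_le_of {t₀ c : ℝ} (x : V m) (h1 : psiV x - t₀ ≤ c)
    (h2 : t₀ - psiV x - (1/(m:ℝ)) ^ x.length ≤ c) (h3 : 0 ≤ c) : dd t₀ x ≤ c :=
  max_le h1 (max_le h2 h3)

section deltapos
variable {δ : ℝ} (hδ : 0 < δ)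
include hδ

lemma FF_nonneg {s : ℝ} (hs : 0 ≤ s) : 0 ≤ FF δ s :=
  le_min one_pos.le (by positivity)

lemma FF_le_one (s : ℝ) : FF δ s ≤ 1 := min_le_left _ _

lemma FF_mono {a b : ℝ} (hab : a ≤ b) : FF δ a ≤ FF δ b :=
  min_le_min le_rfl (div_le_div_of_nonneg_right hab hδ.le)

lemma FF_lip {a b c : ℝ} (h : b ≤ a + c) (hc : 0 ≤ c) : FF δ b ≤ FF δ a + c / δ := by
  have h1 : FF δ b ≤ min 1 (a/δ + c/δ) := by
    refine min_le_min le_rfl ?_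
    rw [← add_div]
    exact div_le_div_of_nonneg_right h hδ.le
  rcases le_total (a/δ) 1 with h2 | h2
  · refine h1.trans ?_
    rw [FF, min_eq_right h2]
    exact min_le_right _ _
  · refine h1.trans ?_
    rw [FF, min_eq_left h2]
    have : (0:ℝ) ≤ c/δ := by positivity
    refine le_trans (min_le_left _ _) (by linarith)

lemma FF_one {s : ℝ} (hs : δ ≤ s) : FF δ s = 1 := by
  rw [FF, min_eq_left]
  rw [le_div_iff₀ hδ]; linarith

end deltapos

section mtwo
variable (hm : 2 ≤ m)
include hm

lemma psiV_le_append (x : V m) (i : Fin m) : psiV x ≤ psiV (x ++ [i]) := by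
  rw [psiV_append]
  have h0 := hm0R hm
  have : (0:ℝ) ≤ (i:ℝ) / (m:ℝ) ^ (x.length + 1) := by positivity
  linarith

lemma psiV_append_add (x : V m) (i : Fin m) :
    psiV (x ++ [i]) + (1/(m:ℝ)) ^ (x.length + 1) ≤ psiV x + (1/(m:ℝ)) ^ x.length := by
  rw [psiV_append]
  have h0 := hm0R hm
  have hpow : (0:ℝ) < (m:ℝ) ^ (x.length + 1) := by positivity
  have hi : (i:ℝ) + 1 ≤ (m:ℝ) := by exact_mod_cast Nat.succ_le_of_lt i.isLt
  have e1 : (1/(m:ℝ)) ^ (x.length + 1) = 1 / (m:ℝ) ^ (x.length+1) := one_div_pow _ _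
  have e2 : (1/(m:ℝ)) ^ x.length = 1 / (m:ℝ) ^ x.length := one_div_pow _ _
  rw [e1, e2]
  have key : ((i:ℝ) + 1) / (m:ℝ) ^ (x.length+1) ≤ 1 / (m:ℝ) ^ x.length := by
    rw [div_le_div_iff₀ hpow (by positivity)]
    rw [pow_succ]
    calc ((i:ℝ) + 1) * (m:ℝ) ^ x.length ≤ (m:ℝ) * (m:ℝ) ^ x.length :=
          mul_le_mul_of_nonneg_right hi (by positivity)
      _ = 1 * ((m:ℝ) ^ x.length * (m:ℝ)) := by ring
  rw [add_div] at key
  linarith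

lemma dd_le_append (t₀ : ℝ) (x : V m) (i : Fin m) : dd t₀ x ≤ dd t₀ (x ++ [i]) := by
  have h1 := psiV_le_append hm x i
  have h2 := psiV_append_add hm x i
  have hgl := dd_ge_left t₀ (x ++ [i])
  have hgr := dd_ge_right t₀ (x ++ [i])
  have hg0 := dd_nonneg t₀ (x ++ [i])
  rw [show (x ++ [i]).length = x.length + 1 by simp] at hgr
  exact dd_le_of x (by linarith) (by linarith) hg0

lemma dd_append_le (t₀ : ℝ) (x : V m) (i : Fin m) :
    dd t₀ (x ++ [i]) ≤ dd t₀ x + (1/(m:ℝ)) ^ x.length := by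
  have h1 := psiV_le_append hm x i
  have h2 := psiV_append_add hm x i
  have hl : (x ++ [i]).length = x.length + 1 := by simp
  have hd0 := dd_nonneg t₀ x
  have hdl := dd_ge_left t₀ x
  have hdr := dd_ge_right t₀ x
  have hp : (0:ℝ) < (1/(m:ℝ)) ^ (x.length + 1) := by
    have := hm0R hm; positivity
  have hp0 : (0:ℝ) ≤ (1/(m:ℝ)) ^ x.length := by
    have := hm0R hm; positivity
  have := dd_le_of (t₀ := t₀) (c := dd t₀ x + (1/(m:ℝ)) ^ x.length) (x ++ [i])
  rw [hl] at this
  exact this (by linarith) (by linarith) (by linarith)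

lemma dd_spine {t₀ : ℝ} {x : V m} (h1 : psiV x ≤ t₀)
    (h2 : t₀ ≤ psiV x + (1/(m:ℝ)) ^ x.length) : dd t₀ x = 0 := by
  unfold dd
  rw [max_eq_right, max_eq_right] <;> linarith [le_max_right (t₀ - psiV x - (1/(m:ℝ)) ^ x.length) (0:ℝ)]

lemma dd_lower {t₀ s : ℝ} {x : V m} (h1 : psiV x ≤ s)
    (h2 : s ≤ psiV x + (1/(m:ℝ)) ^ x.length) :
    |s - t₀| - (1/(m:ℝ)) ^ x.length ≤ dd t₀ x := by
  rcases abs_cases (s - t₀) with ⟨he, _⟩ | ⟨he, _⟩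
  · rw [he]
    have := dd_ge_left t₀ x
    linarith
  · rw [he]
    have := dd_ge_right t₀ x
    linarith

section deltapos2
variable {δ : ℝ} (hδ : 0 < δ)
include hδ

lemma AA_pos : 0 < AA m δ := by
  have h1 := hm1R hm
  have h0 := hm0R hm
  have : (0:ℝ) < (m:ℝ) - 1 := by linarith
  unfold AA
  positivity

lemma gap_nonneg (n : ℕ) : 0 ≤ gap m δ n := by
  have h1 := AA_pos hm hδ
  have h2 := rr_pos hm
  have h3 := rr_lt_one hm
  have h0 := hm0R hm
  unfold gap
  have : (0:ℝ) < 1 - rr m := by linarith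
  positivity

lemma key1 (n : ℕ) : (1/(m:ℝ))^n/δ + gap m δ n ≤ AA m δ * rr m ^ n * (1 - rr m) := by
  have h1 := hm1R hm
  have h0 := hm0R hm
  have hδ' : δ ≠ 0 := ne_of_gt hδ
  have hm1 : (m:ℝ) - 1 ≠ 0 := by linarith
  have hmne : (m:ℝ) ≠ 0 := ne_of_gt h0
  have hm1' : (m:ℝ) + 1 ≠ 0 := by linarith
  have e : AA m δ * rr m ^ n * (1 - rr m) - gap m δ n = rr m ^ n / δ := by
    unfold gap AA rr
    field_simp
    ring
  have hr : (1/(m:ℝ)) ≤ rr m := by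
    rw [rr, div_le_div_iff₀ h0 (by linarith)]
    nlinarith
  have h2 : (1/(m:ℝ))^n ≤ rr m ^ n := by
    apply pow_le_pow_left₀ (by positivity) hr
  have h3 : (1/(m:ℝ))^n/δ ≤ rr m ^ n / δ := div_le_div_of_nonneg_right h2 hδ.le
  linarith

lemma key2 (n : ℕ) : AA m δ * rr m ^ n * (1 - rr m) = (m:ℝ) * gap m δ (n+1) := by
  have h1 := hm1R hm
  have h0 := hm0R hm
  have hδ' : δ ≠ 0 := ne_of_gt hδ
  have hm1 : (m:ℝ) - 1 ≠ 0 := by linarith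
  have hmne : (m:ℝ) ≠ 0 := ne_of_gt h0
  have hm1' : (m:ℝ) + 1 ≠ 0 := by linarith
  have hr : (m:ℝ) * (2/((m:ℝ)+1)) * rr m = 1 := by
    unfold rr
    field_simp
  unfold gap
  rw [pow_succ]
  linear_combination (-(AA m δ * rr m ^ n * (1 - rr m))) * hr

lemma phiP1 (t₀ : ℝ) (x : V m) (i : Fin m) :
    phi t₀ δ (x ++ [i]) + gap m δ x.length ≤ phi t₀ δ x := by
  have hF := FF_lip hδ (dd_append_le hm t₀ x i)
    (by have := hm0R hm; positivity : (0:ℝ) ≤ (1/(m:ℝ)) ^ x.length)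
  have hk := key1 hm hδ x.length
  have hl : (x ++ [i]).length = x.length + 1 := by simp
  unfold phi
  rw [hl]
  have e : AA m δ * rr m ^ x.length * (1 - rr m)
      = AA m δ * rr m ^ x.length - AA m δ * rr m ^ (x.length + 1) := by ring
  rw [e] at hk
  linarith

lemma phiP3 (t₀ : ℝ) (x : V m) (i j : Fin m) :
    (phi t₀ δ (x ++ [i]) + phi t₀ δ (x ++ [j])) / 2 ≤ phi t₀ δ x := by
  have h1 := phiP1 hm hδ t₀ x i
  have h2 := phiP1 hm hδ t₀ x j
  have h3 := gap_nonneg hm hδ x.length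
  linarith

lemma phiP2 (t₀ : ℝ) (y : V m) (i j : Fin m) :
    (phi t₀ δ y + (m:ℝ) * phi t₀ δ ((y ++ [i]) ++ [j])) / ((m:ℝ) + 1)
      ≤ phi t₀ δ (y ++ [i]) := by
  have h0 := hm0R hm
  have hne : (0:ℝ) < (m:ℝ) + 1 := by linarith
  have hl : (y ++ [i]).length = y.length + 1 := by simp
  have hFy : FF δ (dd t₀ y) ≤ FF δ (dd t₀ (y ++ [i])) :=
    FF_mono hδ (dd_le_append hm t₀ y i)
  have hP1 : phi t₀ δ ((y ++ [i]) ++ [j]) + gap m δ (y.length + 1) ≤ phi t₀ δ (y ++ [i]) := by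
    have := phiP1 hm hδ t₀ (y ++ [i]) j
    rwa [hl] at this
  have hk2 := key2 hm hδ (n := y.length)
  rw [div_le_iff₀ hne]
  have hy : phi t₀ δ y ≤ phi t₀ δ (y ++ [i]) + AA m δ * rr m ^ y.length
      - AA m δ * rr m ^ (y.length + 1) := by
    unfold phi
    rw [hl]
    linarith
  have hmul := mul_le_mul_of_nonneg_left hP1 h0.le
  have e0 : AA m δ * rr m ^ y.length * (1 - rr m)
      = AA m δ * rr m ^ y.length - AA m δ * rr m ^ (y.length + 1) := by ring
  linarith
end deltapos2
end mtwo
end Stmt10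
end AuxE
section AuxF
variable {m : ℕ}
namespace Stmt10

noncomputable def upBar (t₀ δ c K : ℝ) (x : V m) : ℝ := c + K * phi t₀ δ x
noncomputable def lowBar (t₀ δ c K : ℝ) (x : V m) : ℝ := c - K * phi t₀ δ x

section mtwo
variable (hm : 2 ≤ m) {δ : ℝ} (hδ : 0 < δ)
include hm hδ

lemma phi_nonneg (t₀ : ℝ) (x : V m) : 0 ≤ phi t₀ δ x := by
  have h1 := FF_nonneg hδ (dd_nonneg t₀ x)
  have h2 := AA_pos hm hδ
  have h3 := rr_pos hm
  have : (0:ℝ) ≤ AA m δ * rr m ^ x.length := by positivity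
  unfold phi
  linarith

lemma upBar_interior (t₀ c K : ℝ) (hK : 0 ≤ K) :
    ∀ x : V m, opMin (upBar t₀ δ c K) x ≤ upBar t₀ δ c K x := by
  intro x
  refine (opMin_le_pair hm _ x (i₀_ne_i₁ hm)).trans ?_
  have hp3 := phiP3 hm hδ t₀ x (i₀ hm) (i₁ hm)
  have hp3' := mul_le_mul_of_nonneg_left hp3 hK
  simp only [upBar]
  linarith

lemma lowBar_interior (t₀ c K : ℝ) (hK : 0 ≤ K) :
    ∀ x : V m, lowBar t₀ δ c K x ≤ opMin (lowBar t₀ δ c K) x := by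
  intro x
  apply le_opMin hm
  · intro i j hij
    have h := phiP3 hm hδ t₀ x i j
    have h' := mul_le_mul_of_nonneg_left h hK
    simp only [lowBar]
    linarith
  · intro hx i
    have hzy := List.dropLast_concat_getLast hx
    have h2 := phiP2 hm hδ t₀ x.dropLast (x.getLast hx) i
    rw [hzy] at h2
    have h2' := mul_le_mul_of_nonneg_left h2 hK
    have hne : (0:ℝ) < (m:ℝ) + 1 := by have := hm0R hm; linarith
    simp only [lowBar]
    have e : (c - K * phi t₀ δ x.dropLast + (m:ℝ) * (c - K * phi t₀ δ (x ++ [i]))) / ((m:ℝ)+1)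
        = c - K * ((phi t₀ δ x.dropLast + (m:ℝ) * phi t₀ δ (x ++ [i])) / ((m:ℝ)+1)) := by
      field_simp
      ring
    rw [e]
    linarith

end mtwo

/-- The full barrier lemma. -/
lemma barrier (hm : 2 ≤ m) (g : ℝ → ℝ) (hg : ContinuousOn g (Set.Icc (0:ℝ) 1))
    (Ml Mu : ℝ) (hMl : ∀ s ∈ Set.Icc (0:ℝ) 1, Ml ≤ g s)
    (hMu : ∀ s ∈ Set.Icc (0:ℝ) 1, g s ≤ Mu)
    (π : ℕ → Fin m) {ε : ℝ} (hε : 0 < ε) :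
    (∃ v, IsSup m g v ∧ ∀ᶠ k in Filter.atTop, v (bvert π k) ≤ g (psiB m π) + 2*ε) ∧
    (∃ u, IsSub m g u ∧ ∀ᶠ k in Filter.atTop, g (psiB m π) - 2*ε ≤ u (bvert π k)) := by
  have h0 := hm0R hm
  have h1 := hm1R hm
  set t₀ := psiB m π with ht₀def
  have ht₀ := psiB_mem_Icc hm π
  obtain ⟨δ₀, hδ₀pos, hδ₀⟩ := Metric.continuousWithinAt_iff.mp (hg t₀ ht₀) ε hε
  set δ := δ₀ / 2 with hδdef
  have hδ : 0 < δ := by positivity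
  set K := Mu - Ml with hKdef
  have hK0 : 0 ≤ K := by
    have := hMl 0 ⟨le_rfl, zero_le_one⟩
    have := hMu 0 ⟨le_rfl, zero_le_one⟩
    linarith
  have hφ0 := phi_nonneg hm hδ t₀
  -- eventual smallness of powers
  have hm_inv_lt : (1:ℝ)/(m:ℝ) < 1 := by rw [div_lt_one h0]; exact h1
  have htopow : Filter.Tendsto (fun k : ℕ => (1/(m:ℝ))^k) Filter.atTop (nhds 0) :=
    tendsto_pow_atTop_nhds_zero_of_lt_one (by positivity) hm_inv_lt
  have hrpow : Filter.Tendsto (fun k : ℕ => K * AA m δ * rr m ^ k) Filter.atTop (nhds 0) := by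
    have := (tendsto_pow_atTop_nhds_zero_of_lt_one (rr_pos hm).le (rr_lt_one hm)).const_mul
      (K * AA m δ)
    simpa using this
  -- facts about dd along any branch
  have hddlow : ∀ (σ : ℕ → Fin m) (k : ℕ),
      |psiB m σ - t₀| - (1/(m:ℝ))^k ≤ dd t₀ (bvert σ k) := by
    intro σ k
    obtain ⟨hb1, hb2⟩ := tail_bound hm σ k
    have hb2' : psiB m σ ≤ psiV (bvert σ k) + (1/(m:ℝ)) ^ (bvert σ k).length := by
      rwa [length_bvert]
    have := dd_lower hm (t₀ := t₀) hb1 hb2'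
    rwa [length_bvert] at this
  have hddspine : ∀ k, dd t₀ (bvert π k) = 0 := by
    intro k
    obtain ⟨hb1, hb2⟩ := tail_bound hm π k
    exact dd_spine hm hb1 (by rwa [length_bvert])
  have hFF0 : FF δ 0 = 0 := by
    rw [FF, zero_div]
    exact min_eq_right zero_le_one
  have hphispine : ∀ k, phi t₀ δ (bvert π k) = AA m δ * rr m ^ k := by
    intro k
    rw [phi, hddspine, hFF0, length_bvert, zero_add]
  -- boundary inequality for the upper barrier along arbitrary branches
  have hbdryU : ∀ σ : ℕ → Fin m, ∀ᶠ k in Filter.atTop,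
      g (psiB m σ) ≤ g t₀ + ε + K * phi t₀ δ (bvert σ k) := by
    intro σ
    have hσIcc := psiB_mem_Icc hm σ
    rcases lt_or_ge (dist (psiB m σ) t₀) δ₀ with hnear | hfar
    · have hg1 : dist (g (psiB m σ)) (g t₀) < ε := hδ₀ hσIcc hnear
      rw [Real.dist_eq, abs_sub_lt_iff] at hg1
      filter_upwards with k
      have := mul_nonneg hK0 (hφ0 (bvert σ k))
      linarith [hg1.1]
    · filter_upwards [htopow.eventually_le_const hδ] with k hk
      have hdd : δ ≤ dd t₀ (bvert σ k) := by
        have := hddlow σ k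
        rw [Real.dist_eq] at hfar
        have : δ₀ - (1/(m:ℝ))^k ≤ dd t₀ (bvert σ k) := by linarith
        linarith [hk]
      have hFF1 : FF δ (dd t₀ (bvert σ k)) = 1 := FF_one hδ hdd
      have hphi1 : 1 ≤ phi t₀ δ (bvert σ k) := by
        rw [phi, hFF1]
        have := AA_pos hm hδ
        have := rr_pos hm
        have : (0:ℝ) ≤ AA m δ * rr m ^ (bvert σ k).length := by positivity
        linarith
      have := mul_le_mul_of_nonneg_left hphi1 hK0
      have hgl := hMl t₀ ht₀
      have hgu := hMu (psiB m σ) hσIcc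
      rw [hKdef] at *
      nlinarith
  -- boundary inequality for the lower barrier
  have hbdryL : ∀ σ : ℕ → Fin m, ∀ᶠ k in Filter.atTop,
      g t₀ - ε - K * phi t₀ δ (bvert σ k) ≤ g (psiB m σ) := by
    intro σ
    have hσIcc := psiB_mem_Icc hm σ
    rcases lt_or_ge (dist (psiB m σ) t₀) δ₀ with hnear | hfar
    · have hg1 : dist (g (psiB m σ)) (g t₀) < ε := hδ₀ hσIcc hnear
      rw [Real.dist_eq, abs_sub_lt_iff] at hg1
      filter_upwards with k
      have := mul_nonneg hK0 (hφ0 (bvert σ k))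
      linarith [hg1.2]
    · filter_upwards [htopow.eventually_le_const hδ] with k hk
      have hdd : δ ≤ dd t₀ (bvert σ k) := by
        have := hddlow σ k
        rw [Real.dist_eq] at hfar
        linarith [hk]
      have hFF1 : FF δ (dd t₀ (bvert σ k)) = 1 := FF_one hδ hdd
      have hphi1 : 1 ≤ phi t₀ δ (bvert σ k) := by
        rw [phi, hFF1]
        have := AA_pos hm hδ
        have := rr_pos hm
        have : (0:ℝ) ≤ AA m δ * rr m ^ (bvert σ k).length := by positivity
        linarith
      have := mul_le_mul_of_nonneg_left hphi1 hK0
      have hgl := hMl (psiB m σ) hσIcc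
      have hgu := hMu t₀ ht₀
      rw [hKdef] at *
      nlinarith
  constructor
  · refine ⟨upBar t₀ δ (g t₀ + ε) K, ⟨upBar_interior hm hδ t₀ _ K hK0, ?_⟩, ?_⟩
    · intro σ ε' hε'
      filter_upwards [hbdryU σ] with k hk
      simp only [upBar]
      linarith
    · filter_upwards [hrpow.eventually_le_const hε] with k hk
      simp only [upBar, hphispine k]
      have : K * (AA m δ * rr m ^ k) = K * AA m δ * rr m ^ k := by ring
      rw [this]
      linarith
  · refine ⟨lowBar t₀ δ (g t₀ - ε) K, ⟨lowBar_interior hm hδ t₀ _ K hK0, ?_⟩, ?_⟩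
    · intro σ ε' hε'
      filter_upwards [hbdryL σ] with k hk
      simp only [lowBar]
      linarith
    · filter_upwards [hrpow.eventually_le_const hε] with k hk
      simp only [lowBar, hphispine k]
      have : K * (AA m δ * rr m ^ k) = K * AA m δ * rr m ^ k := by ring
      rw [this]
      linarith
end Stmt10
end AuxF
section AuxG
variable {m : ℕ}
namespace Stmt10
section mtwo
variable (hm : 2 ≤ m)
include hm

lemma const_isSub (g : ℝ → ℝ) {c : ℝ} (hc : ∀ s ∈ Set.Icc (0:ℝ) 1, c ≤ g s) :
    IsSub m g (fun _ => c) := by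
  have h0 := hm0R hm
  constructor
  · intro x
    apply le_opMin hm
    · intro i j hij; linarith
    · intro hx i
      rw [le_div_iff₀ (by linarith)]
      nlinarith
  · intro π ε hε
    filter_upwards with k
    have := hc _ (psiB_mem_Icc hm π)
    linarith

lemma const_isSup (g : ℝ → ℝ) {c : ℝ} (hc : ∀ s ∈ Set.Icc (0:ℝ) 1, g s ≤ c) :
    IsSup m g (fun _ => c) := by
  have h0 := hm0R hm
  constructor
  · intro x
    refine (opMin_le_pair hm _ x (i₀_ne_i₁ hm)).trans ?_
    norm_num
  · intro π ε hε
    filter_upwards with k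
    have := hc _ (psiB_mem_Icc hm π)
    linarith

lemma sol_isSub (g : ℝ → ℝ) {u : V m → ℝ}
    (h1 : ∀ x : V m, u x = opMin u x)
    (h2 : ∀ π : ℕ → Fin m, Filter.Tendsto (fun k => u (bvert π k)) Filter.atTop
      (nhds (g (psiB m π)))) : IsSub m g u := by
  refine ⟨fun x => le_of_eq (h1 x), fun π ε hε => ?_⟩
  have := (h2 π).eventually (Metric.closedBall_mem_nhds (g (psiB m π)) hε)
  filter_upwards [this] with k hk
  rw [Real.dist_eq, abs_sub_le_iff] at hk
  linarith [hk.1]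

lemma sol_isSup (g : ℝ → ℝ) {u : V m → ℝ}
    (h1 : ∀ x : V m, u x = opMin u x)
    (h2 : ∀ π : ℕ → Fin m, Filter.Tendsto (fun k => u (bvert π k)) Filter.atTop
      (nhds (g (psiB m π)))) : IsSup m g u := by
  refine ⟨fun x => ge_of_eq (h1 x), fun π ε hε => ?_⟩
  have := (h2 π).eventually (Metric.closedBall_mem_nhds (g (psiB m π)) hε)
  filter_upwards [this] with k hk
  rw [Real.dist_eq, abs_sub_le_iff] at hk
  linarith [hk.2]

end mtwo
end Stmt10
end AuxG

open Stmt10 in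
theorem stmt10' (m : ℕ) (hm : 2 ≤ m) (g : ℝ → ℝ)
    (hg : ContinuousOn g (Set.Icc (0 : ℝ) 1)) :
    ∃! u : V m → ℝ,
      (∀ x : V m, u x = opMin u x) ∧
      (∀ π : ℕ → Fin m,
        Filter.Tendsto (fun k => u (bvert π k)) Filter.atTop
          (nhds (g (psiB m π)))) := by
  -- bounds for g on [0,1]
  obtain ⟨Mu, hMu⟩ := (isCompact_Icc.image_of_continuousOn hg).bddAbove
  obtain ⟨Ml, hMl⟩ := (isCompact_Icc.image_of_continuousOn hg).bddBelow
  simp only [mem_upperBounds, mem_lowerBounds, Set.mem_image] at hMu hMl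
  have hMu' : ∀ s ∈ Set.Icc (0:ℝ) 1, g s ≤ Mu := fun s hs => hMu _ ⟨s, hs, rfl⟩
  have hMl' : ∀ s ∈ Set.Icc (0:ℝ) 1, Ml ≤ g s := fun s hs => hMl _ ⟨s, hs, rfl⟩
  -- the envelope
  set uS : V m → ℝ := fun x => sSup {r | ∃ u : V m → ℝ, IsSub m g u ∧ r = u x} with huS
  have hconstSub := const_isSub hm g hMl'
  have hconstSup := const_isSup hm g hMu'
  have hne : ∀ x : V m, {r | ∃ u : V m → ℝ, IsSub m g u ∧ r = u x}.Nonempty :=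
    fun x => ⟨Ml, ⟨fun _ => Ml, hconstSub, rfl⟩⟩
  have hbd : ∀ x : V m, BddAbove {r | ∃ u : V m → ℝ, IsSub m g u ∧ r = u x} := by
    intro x
    refine ⟨Mu, ?_⟩
    rintro r ⟨u, hu, rfl⟩
    exact comparison hm g hu hconstSup x
  have hle : ∀ u : V m → ℝ, IsSub m g u → ∀ x, u x ≤ uS x :=
    fun u hu x => le_csSup (hbd x) ⟨u, hu, rfl⟩
  have hSle : ∀ (x : V m) (c : ℝ), (∀ u : V m → ℝ, IsSub m g u → u x ≤ c) → uS x ≤ c :=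
    fun x c h => csSup_le (hne x) (by rintro r ⟨u, hu, rfl⟩; exact h u hu)
  -- uS is a subsolution in the interior
  have hsub1 : ∀ x : V m, uS x ≤ opMin uS x := by
    intro x
    apply hSle
    intro u hu
    exact (hu.1 x).trans (opMin_mono hm (hle u hu) x)
  -- upper boundary bound via barriers
  have hup : ∀ (π : ℕ → Fin m) (ε : ℝ), 0 < ε →
      ∀ᶠ k in Filter.atTop, uS (bvert π k) ≤ g (psiB m π) + ε := by
    intro π ε hε
    obtain ⟨⟨v, hvSup, hvlim⟩, -⟩ := barrier hm g hg Ml Mu hMl' hMu' π (half_pos hε)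
    have hle_v : ∀ z : V m, uS z ≤ v z :=
      fun z => hSle z (v z) (fun u hu => comparison hm g hu hvSup z)
    filter_upwards [hvlim] with k hk
    calc uS (bvert π k) ≤ v (bvert π k) := hle_v _
      _ ≤ g (psiB m π) + 2 * (ε/2) := hk
      _ = g (psiB m π) + ε := by ring
  have hSubS : IsSub m g uS := ⟨hsub1, hup⟩
  -- supersolution property via bump
  have hsup1 : ∀ x : V m, opMin uS x ≤ uS x := by
    by_contra hcon
    push_neg at hcon
    obtain ⟨x₀, hx₀⟩ := hcon
    set u' : V m → ℝ := Function.update uS x₀ (opMin uS x₀) with hu'def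
    have hptle : ∀ z : V m, uS z ≤ u' z := by
      intro z
      by_cases hz : z = x₀
      · subst hz
        rw [hu'def, Function.update_self]
        exact hsub1 z
      · rw [hu'def, Function.update_of_ne hz]
    have hu' : IsSub m g u' := by
      constructor
      · intro x
        by_cases hx : x = x₀
        · subst hx
          rw [hu'def, Function.update_self]
          exact opMin_mono hm hptle x
        · rw [hu'def, Function.update_of_ne hx]
          exact (hsub1 x).trans (opMin_mono hm hptle x)
      · intro π ε hε
        filter_upwards [hup π ε hε, Filter.eventually_gt_atTop x₀.length] with k h1 h2
        have hne' : bvert π k ≠ x₀ := by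
          intro h
          rw [← h, length_bvert] at h2
          omega
        rw [hu'def, Function.update_of_ne hne']
        exact h1
    have := hle u' hu' x₀
    rw [hu'def, Function.update_self] at this
    exact absurd this (not_le.mpr hx₀)
  have heq : ∀ x : V m, uS x = opMin uS x := fun x => le_antisymm (hsub1 x) (hsup1 x)
  -- lower boundary bound
  have hlow : ∀ (π : ℕ → Fin m) (ε : ℝ), 0 < ε →
      ∀ᶠ k in Filter.atTop, g (psiB m π) - ε ≤ uS (bvert π k) := by
    intro π ε hε
    obtain ⟨-, ⟨u, huSub, hulim⟩⟩ := barrier hm g hg Ml Mu hMl' hMu' π (half_pos hε)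
    filter_upwards [hulim] with k hk
    calc g (psiB m π) - ε = g (psiB m π) - 2 * (ε/2) := by ring
      _ ≤ u (bvert π k) := hk
      _ ≤ uS (bvert π k) := hle u huSub _
  have hSupS : IsSup m g uS := ⟨hsup1, hlow⟩
  -- convergence along branches
  have htend : ∀ π : ℕ → Fin m,
      Filter.Tendsto (fun k => uS (bvert π k)) Filter.atTop (nhds (g (psiB m π))) := by
    intro π
    rw [Metric.tendsto_atTop]
    intro ε hε
    have h2 : 0 < ε/2 := half_pos hε
    obtain ⟨N, hN⟩ := ((hup π (ε/2) h2).and (hlow π (ε/2) h2)).exists_forall_of_atTop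
    refine ⟨N, fun n hn => ?_⟩
    obtain ⟨ha, hb⟩ := hN n hn
    rw [Real.dist_eq, abs_sub_lt_iff]
    constructor <;> linarith
  refine ⟨uS, ⟨heq, htend⟩, ?_⟩
  rintro u ⟨hu1, hu2⟩
  funext x
  have h1 := comparison hm g (sol_isSub hm g hu1 hu2) hSupS x
  have h2 := comparison hm g hSubS (sol_isSup hm g hu1 hu2) x
  linarith

/-- existence and uniqueness of the solution to the envelope
equation attaining a continuous boundary datum. -/
theorem stmt10 (m : ℕ) (hm : 2 ≤ m) (g : ℝ → ℝ)
    (hg : ContinuousOn g (Set.Icc (0 : ℝ) 1)) :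
    ∃! u : V m → ℝ,
      (∀ x : V m, u x = opMin u x) ∧
      (∀ π : ℕ → Fin m,
        Filter.Tendsto (fun k => u (bvert π k)) Filter.atTop
          (nhds (g (psiB m π)))) := stmt10' m hm g hg
end

section
/- Let f: T_m → ℝ be bounded and u*_f its convex envelope (largest convex function ≤ f). On the coincidence set CS(f) = {x : f(x) = u*_f(x)}, f satisfies f(x) ≤ min{ min over distinct successors y,z of (f(y)+f(z))/2 ; min over successors y of (f(x̂)+m·f(y))/(m+1) }, while outside CS(f) the envelope satisfies the equation with equality: u*_f(x) = min{ min over distinct successors y,z of (u*_f(y)+u*_f(z))/2 ; min over successors y of (u*_f(x̂)+m·u*_f(y))/(m+1) }. -/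
open Filter Finset

variable {m : ℕ}

/-! Local convexity at `x` says exactly `u x ≤ opMin u x`, and `opMin` is monotone in `u`.
The supremum `envF f` of the convex minorants of `f` is therefore convex, which gives the
inequality on the coincidence set. If `envF f x < f x` and the inequality at `x` were strict,
raising `envF f` at `x` alone to `min (f x) (opMin (envF f) x)` would produce a larger convex
minorant. -/

lemma locConvex_const (c : ℝ) : LocConvex (m := m) (fun _ => c) := by
  refine fun _ => ⟨fun _ _ _ => by linarith, fun _ _ => ?_⟩
  rw [le_div_iff₀ (by positivity)]
  linarith

lemma le_opMin_iff (hm : 2 ≤ m) {u : V m → ℝ} {x : V m} {c : ℝ} :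
    c ≤ opMin u x ↔
      (∀ i j : Fin m, i ≠ j → c ≤ (u (x ++ [i]) + u (x ++ [j])) / 2) ∧
      (x ≠ [] → ∀ i : Fin m,
        c ≤ (u x.dropLast + (m : ℝ) * u (x ++ [i])) / ((m : ℝ) + 1)) := by
  have hbin : c ≤ binMin u x ↔
      ∀ i j : Fin m, i ≠ j → c ≤ (u (x ++ [i]) + u (x ++ [j])) / 2 := by
    have hbdd : BddBelow {r | ∃ i j : Fin m, i ≠ j ∧ r = (u (x ++ [i]) + u (x ++ [j])) / 2} :=
      (Set.finite_range fun p : Fin m × Fin m =>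
        (u (x ++ [p.1]) + u (x ++ [p.2])) / 2).bddBelow.mono
          (by rintro _ ⟨i, j, -, rfl⟩; exact ⟨(i, j), rfl⟩)
    rw [binMin, le_csInf_iff hbdd ⟨_, ⟨0, by omega⟩, ⟨1, by omega⟩, by simp, rfl⟩]
    exact ⟨fun h i j hij => h _ ⟨i, j, hij, rfl⟩,
      fun h _ ⟨i, j, hij, hr⟩ => hr ▸ h i j hij⟩
  have hpred : c ≤ sInf {r | ∃ i : Fin m,
      r = (u x.dropLast + (m : ℝ) * u (x ++ [i])) / ((m : ℝ) + 1)} ↔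
      ∀ i : Fin m, c ≤ (u x.dropLast + (m : ℝ) * u (x ++ [i])) / ((m : ℝ) + 1) := by
    have hbdd : BddBelow {r | ∃ i : Fin m,
        r = (u x.dropLast + (m : ℝ) * u (x ++ [i])) / ((m : ℝ) + 1)} :=
      (Set.finite_range fun i : Fin m =>
        (u x.dropLast + (m : ℝ) * u (x ++ [i])) / ((m : ℝ) + 1)).bddBelow.mono
          (by rintro _ ⟨i, rfl⟩; exact ⟨i, rfl⟩)
    rw [le_csInf_iff hbdd ⟨_, ⟨0, by omega⟩, rfl⟩]
    exact ⟨fun h i => h _ ⟨i, rfl⟩, fun h _ ⟨i, hr⟩ => hr ▸ h i⟩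
  unfold opMin
  split_ifs with hx
  · simpa [hx] using hbin
  · simp [hx, hbin, hpred]

lemma locConvex_iff_forall_le_opMin (hm : 2 ≤ m) {u : V m → ℝ} :
    LocConvex u ↔ ∀ x, u x ≤ opMin u x :=
  forall_congr' fun _ => (le_opMin_iff hm).symm

lemma opMin_mono (hm : 2 ≤ m) {u v : V m → ℝ} (huv : u ≤ v) (x : V m) :
    opMin u x ≤ opMin v x := by
  obtain ⟨hbin, hpred⟩ := (le_opMin_iff hm).1 (le_refl (opMin u x))
  refine (le_opMin_iff hm).2
    ⟨fun i j hij => (hbin i j hij).trans ?_, fun hx i => (hpred hx i).trans ?_⟩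
  · have := huv (x ++ [i]); have := huv (x ++ [j])
    gcongr
  · have := huv x.dropLast; have := huv (x ++ [i])
    gcongr

lemma LocConvex.update (hm : 2 ≤ m) {u : V m → ℝ} (hu : LocConvex u) {x : V m} {c : ℝ}
    (hxc : u x ≤ c) (hc : c ≤ opMin u x) : LocConvex (Function.update u x c) := by
  have hle : u ≤ Function.update u x c := le_update_iff.2 ⟨hxc, fun _ _ => le_rfl⟩
  refine (locConvex_iff_forall_le_opMin hm).2 fun y => ?_
  refine le_trans ?_ (opMin_mono hm hle y)
  rcases eq_or_ne y x with rfl | hy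
  · simpa using hc
  · simpa [hy] using (locConvex_iff_forall_le_opMin hm).1 hu y

section Envelope

variable {f : V m → ℝ}

lemma le_envF {u : V m → ℝ} (hu : LocConvex u) (huf : u ≤ f) (x : V m) : u x ≤ envF f x :=
  le_csSup ⟨f x, by rintro _ ⟨v, -, hvf, rfl⟩; exact hvf x⟩ ⟨u, hu, huf, rfl⟩

lemma envF_le_of_forall (hf : BddBelow (Set.range f)) {x : V m} {c : ℝ}
    (h : ∀ u : V m → ℝ, LocConvex u → u ≤ f → u x ≤ c) : envF f x ≤ c := by
  obtain ⟨b, hb⟩ := hf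
  refine csSup_le ⟨b, fun _ => b, locConvex_const b, fun z => hb ⟨z, rfl⟩, rfl⟩ ?_
  rintro _ ⟨u, hu, huf, rfl⟩
  exact h u hu huf

lemma envF_le (hf : BddBelow (Set.range f)) : envF f ≤ f :=
  fun _ => envF_le_of_forall hf fun _ _ huf => huf _

lemma locConvex_envF (hm : 2 ≤ m) (hf : BddBelow (Set.range f)) : LocConvex (envF f) :=
  (locConvex_iff_forall_le_opMin hm).2 fun _ => envF_le_of_forall hf fun _ hu huf =>
    ((locConvex_iff_forall_le_opMin hm).1 hu _).trans (opMin_mono hm (le_envF hu huf) _)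

lemma le_opMin_of_eq_envF (hm : 2 ≤ m) (hf : BddBelow (Set.range f)) {x : V m}
    (hx : f x = envF f x) : f x ≤ opMin f x :=
  calc f x = envF f x := hx
    _ ≤ opMin (envF f) x := (locConvex_iff_forall_le_opMin hm).1 (locConvex_envF hm hf) x
    _ ≤ opMin f x := opMin_mono hm (envF_le hf) x

lemma envF_eq_opMin_of_lt (hm : 2 ≤ m) (hf : BddBelow (Set.range f)) {x : V m}
    (hx : envF f x < f x) : envF f x = opMin (envF f) x := by
  have hconv := locConvex_envF hm hf
  refine le_antisymm ((locConvex_iff_forall_le_opMin hm).1 hconv x) (not_lt.1 fun hlt => ?_)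
  set c := min (f x) (opMin (envF f) x)
  have hbump : LocConvex (Function.update (envF f) x c) :=
    hconv.update hm (le_min hx.le hlt.le) (min_le_right _ _)
  have hbump_le : Function.update (envF f) x c ≤ f :=
    update_le_iff.2 ⟨min_le_left _ _, fun z _ => envF_le hf z⟩
  have : c ≤ envF f x := by simpa using le_envF hbump hbump_le x
  exact (lt_min hx hlt).not_ge this

end Envelope

/-- on the coincidence set `f` satisfies the inequality; off it,
the envelope satisfies the equation with equality. -/
theorem stmt12 (m : ℕ) (hm : 2 ≤ m) (f : V m → ℝ)
    (hf : ∃ C : ℝ, ∀ x : V m, |f x| ≤ C) :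
    ∀ x : V m,
      (f x = envF f x → f x ≤ opMin f x) ∧
      (f x ≠ envF f x → envF f x = opMin (envF f) x) := by
  obtain ⟨C, hC⟩ := hf
  have hbdd : BddBelow (Set.range f) :=
    ⟨-C, by rintro _ ⟨z, rfl⟩; exact neg_le_of_abs_le (hC z)⟩
  exact fun x => ⟨le_opMin_of_eq_envF hm hbdd,
    fun hx => envF_eq_opMin_of_lt hm hbdd ((envF_le hbdd x).lt_of_ne (Ne.symm hx))⟩
end
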